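/- arXiv:2203.08885 — 10 statements merged into one kernel-verified Lean document; each statement's English description precedes it below -/
import Mathlib

section
/- Let c be a proper (Δ+1)-coloring of a graph G with maximum degree Δ, let u be a non-frozen vertex, and let c' be obtained from c by recoloring u with a color not appearing in N(u). Then every neighbor v of u that was frozen in c is non-frozen in c'; moreover, the old color c(u) is available for v in c'. -/
theorem stmt2 {V : Type*} [Fintype V] [DecidableEq V] (G : SimpleGraph V)
    [DecidableRel G.Adj] (Δ : ℕ) (hΔ : G.maxDegree = Δ)
    (c : V → Fin (Δ + 1)) (hc : ∀ u v : V, G.Adj u v → c u ≠ c v)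
    (u : V)
    (hu : ¬ (∀ col : Fin (Δ + 1), ∃ w : V, (w = u ∨ G.Adj u w) ∧ c w = col))
    (a : Fin (Δ + 1)) (ha : ∀ w : V, G.Adj u w → c w ≠ a) (hau : a ≠ c u) :
    ∀ v : V, G.Adj u v →
      (∀ col : Fin (Δ + 1), ∃ w : V, (w = v ∨ G.Adj v w) ∧ c w = col) →
      (¬ (∀ col : Fin (Δ + 1), ∃ w : V,
            (w = v ∨ G.Adj v w) ∧ Function.update c u a w = col)) ∧
      (∀ w : V, (w = v ∨ G.Adj v w) → Function.update c u a w ≠ c u) := by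
  intro v huv hfrozen
  -- The closed neighborhood of v as a Finset
  set S : Finset V := insert v (G.neighborFinset v) with hS
  have hmemS : ∀ w : V, w ∈ S ↔ (w = v ∨ G.Adj v w) := by
    intro w
    simp [hS, SimpleGraph.mem_neighborFinset]
  have huS : u ∈ S := (hmemS u).mpr (Or.inr huv.symm)
  have hcardS : S.card ≤ Δ + 1 := by
    have : (G.neighborFinset v).card = G.degree v := rfl
    have hdeg : G.degree v ≤ Δ := hΔ ▸ G.degree_le_maxDegree v
    calc S.card ≤ (G.neighborFinset v).card + 1 := Finset.card_insert_le _ _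
      _ ≤ Δ + 1 := by omega
  -- c restricted to S is surjective onto Fin (Δ+1), hence image is univ
  have himage : S.image c = Finset.univ := by
    apply Finset.eq_univ_of_forall
    intro col
    obtain ⟨w, hw, hcw⟩ := hfrozen col
    exact Finset.mem_image.mpr ⟨w, (hmemS w).mpr hw, hcw⟩
  have hinj : Set.InjOn c S := by
    rw [← Finset.card_image_iff]
    have h1 : (S.image c).card = Δ + 1 := by
      rw [himage]; simp
    have h2 : (S.image c).card ≤ S.card := Finset.card_image_le
    omega
  have key : ∀ w : V, (w = v ∨ G.Adj v w) → Function.update c u a w ≠ c u := by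
    intro w hw
    by_cases hwu : w = u
    · subst hwu
      simp [Function.update_self]
      exact hau
    · rw [Function.update_of_ne hwu]
      intro hcwu
      exact hwu (hinj ((hmemS w).mpr hw) huS hcwu)
  refine ⟨?_, key⟩
  intro h
  obtain ⟨w, hw, hcw⟩ := h (c u)
  exact key w hw hcw
end

section
/- Let P = v_0, v_1, ..., v_m be an induced path in a graph G with maximum degree Δ, let c be a proper (Δ+1)-coloring in which v_0 is non-frozen and v_1, ..., v_m are frozen. Then there exists a sequence of m+1 single-vertex recolorings (a 'ladder'), recoloring v_0, v_1, ..., v_m in this order, such that every intermediate coloring is proper, and in the final coloring, for each 1 ≤ i ≤ m, the new color of v_i equals the old color c(v_{i-1}). -/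
/-- Auxiliary: sequence of colorings obtained by recoloring `v 0, v 1, ..., v m`
in order to colors `d 0, ..., d m`. -/
def ladderSeq {V : Type*} [DecidableEq V] {κ : Type*} (c : V → κ) (m : ℕ)
    (v : ℕ → V) (d : ℕ → κ) : ℕ → V → κ
  | 0 => c
  | (j+1) => if j ≤ m then Function.update (ladderSeq c m v d j) (v j) (d j)
             else ladderSeq c m v d j

theorem stmt3 {V : Type*} [Fintype V] [DecidableEq V] (G : SimpleGraph V)
    [DecidableRel G.Adj] (Δ m : ℕ) (hΔ : G.maxDegree = Δ)
    (v : ℕ → V)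
    (hinj : ∀ i j : ℕ, i ≤ m → j ≤ m → v i = v j → i = j)
    (hind : ∀ i j : ℕ, i ≤ m → j ≤ m →
      (G.Adj (v i) (v j) ↔ (i + 1 = j ∨ j + 1 = i)))
    (c : V → Fin (Δ + 1)) (hc : ∀ a b : V, G.Adj a b → c a ≠ c b)
    (h0 : ¬ (∀ col : Fin (Δ + 1), ∃ w : V, (w = v 0 ∨ G.Adj (v 0) w) ∧ c w = col))
    (hfr : ∀ i : ℕ, 1 ≤ i → i ≤ m →
      ∀ col : Fin (Δ + 1), ∃ w : V, (w = v i ∨ G.Adj (v i) w) ∧ c w = col) :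
    ∃ cs : ℕ → V → Fin (Δ + 1),
      cs 0 = c ∧
      (∀ j : ℕ, j ≤ m → ∀ x : V, x ≠ v j → cs (j + 1) x = cs j x) ∧
      (∀ j : ℕ, j ≤ m + 1 → ∀ a b : V, G.Adj a b → cs j a ≠ cs j b) ∧
      (∀ i : ℕ, 1 ≤ i → i ≤ m → cs (m + 1) (v i) = c (v (i - 1))) := by
  push_neg at h0
  obtain ⟨α, hα⟩ := h0
  -- frozen vertices: injectivity of `c` on the closed neighborhood
  have hinjc : ∀ i : ℕ, 1 ≤ i → i ≤ m → ∀ w w' : V,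
      (w = v i ∨ G.Adj (v i) w) → (w' = v i ∨ G.Adj (v i) w') → c w = c w' → w = w' := by
    intro i hi1 him w w' hw hw' hcc
    set S : Finset V := insert (v i) (G.neighborFinset (v i)) with hS
    have hmem : ∀ x : V, x ∈ S ↔ (x = v i ∨ G.Adj (v i) x) := by
      intro x
      simp [hS, SimpleGraph.mem_neighborFinset]
    have hcard : S.card ≤ Δ + 1 := by
      have : S.card ≤ (G.neighborFinset (v i)).card + 1 := Finset.card_insert_le _ _
      have hdeg : (G.neighborFinset (v i)).card ≤ Δ := by
        have h1 := G.card_neighborFinset_eq_degree (v i)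
        have h2 := G.degree_le_maxDegree (v i)
        omega
      omega
    have himg : S.image c = Finset.univ := by
      apply Finset.eq_univ_of_forall
      intro col
      obtain ⟨w, hw, hcw⟩ := hfr i hi1 him col
      exact Finset.mem_image.2 ⟨w, (hmem w).2 hw, hcw⟩
    have hcardimg : (S.image c).card = S.card := by
      have h1 : (S.image c).card ≤ S.card := Finset.card_image_le
      have h2 : (S.image c).card = Δ + 1 := by rw [himg]; simp
      omega
    have hinjOn : Set.InjOn c S := Finset.card_image_iff.1 hcardimg
    exact hinjOn ((hmem w).2 hw) ((hmem w').2 hw') hcc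
  -- the new colors
  set d : ℕ → Fin (Δ + 1) := fun i => if i = 0 then α else c (v (i - 1)) with hd
  set cs : ℕ → V → Fin (Δ + 1) := ladderSeq c m v d with hcs
  have hsucc : ∀ j : ℕ, j ≤ m → cs (j + 1) = Function.update (cs j) (v j) (d j) := by
    intro j hj
    simp [hcs, ladderSeq, hj]
  -- values: unchanged vertices keep old color
  have h_unch : ∀ j : ℕ, j ≤ m + 1 → ∀ x : V, (∀ i : ℕ, i < j → x ≠ v i) → cs j x = c x := by
    intro j
    induction j with
    | zero => intro _ x _; rfl
    | succ j ih =>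
      intro hj x hx
      have hjm : j ≤ m := by omega
      rw [hsucc j hjm, Function.update_of_ne (hx j (by omega))]
      exact ih (by omega) x (fun i hi => hx i (by omega))
  -- values: recolored vertices
  have h_val : ∀ j : ℕ, j ≤ m + 1 → ∀ i : ℕ, i < j → cs j (v i) = d i := by
    intro j
    induction j with
    | zero => intro _ i hi; omega
    | succ j ih =>
      intro hj i hi
      have hjm : j ≤ m := by omega
      rw [hsucc j hjm]
      by_cases hij : i = j
      · subst hij; simp
      · have hij' : i < j := by omega
        rw [Function.update_of_ne (by
          intro h
          exact hij (hinj i j (by omega) hjm h)), ih (by omega) i hij']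
  -- key: new color of v i differs from old colors of its unchanged neighbors
  have key : ∀ j : ℕ, j ≤ m + 1 → ∀ i : ℕ, i < j → ∀ b : V, G.Adj (v i) b →
      (∀ k : ℕ, k < j → b ≠ v k) → d i ≠ c b := by
    intro j hj i hi b hab hb
    match i with
    | 0 =>
      intro h
      exact hα b (Or.inr hab) (by simpa [hd] using h.symm)
    | (n+1) =>
      have hnm : n + 1 ≤ m := by omega
      have hadj : G.Adj (v (n+1)) (v n) := by
        rw [hind (n+1) n hnm (by omega)]; omega
      intro h
      have : v n = b := hinjc (n+1) (by omega) hnm (v n) b (Or.inr hadj) (Or.inr hab)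
        (by simpa [hd] using h)
      exact hb n (by omega) this.symm
  -- key2: two recolored adjacent vertices get distinct colors
  have hd_ne : ∀ i : ℕ, i + 1 ≤ m → d i ≠ d (i + 1) := by
    intro i him
    match i with
    | 0 =>
      intro h
      exact hα (v 0) (Or.inl rfl) (by simpa [hd] using h.symm)
    | (n+1) =>
      have hadj : G.Adj (v n) (v (n+1)) := by
        rw [hind n (n+1) (by omega) (by omega)]; omega
      intro h
      exact hc (v n) (v (n+1)) hadj (by simpa [hd] using h)
  have key2 : ∀ j : ℕ, j ≤ m + 1 → ∀ i k : ℕ, i < j → k < j → G.Adj (v i) (v k) →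
      d i ≠ d k := by
    intro j hj i k hi hk hadj
    have := (hind i k (by omega) (by omega)).1 hadj
    rcases this with h | h
    · exact h ▸ hd_ne i (by omega)
    · exact (h ▸ hd_ne k (by omega)).symm
  refine ⟨cs, rfl, ?_, ?_, ?_⟩
  · intro j hj x hx
    rw [hsucc j hj, Function.update_of_ne hx]
  · intro j hj a b hab
    by_cases ha : ∃ i : ℕ, i < j ∧ a = v i
    · obtain ⟨i, hi, rfl⟩ := ha
      by_cases hb : ∃ k : ℕ, k < j ∧ b = v k
      · obtain ⟨k, hk, rfl⟩ := hb
        rw [h_val j hj i hi, h_val j hj k hk]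
        exact key2 j hj i k hi hk hab
      · push_neg at hb
        rw [h_val j hj i hi, h_unch j hj b hb]
        exact key j hj i hi b hab hb
    · push_neg at ha
      by_cases hb : ∃ k : ℕ, k < j ∧ b = v k
      · obtain ⟨k, hk, rfl⟩ := hb
        rw [h_val j hj k hk, h_unch j hj a ha]
        exact (key j hj k hk a hab.symm ha).symm
      · push_neg at hb
        rw [h_unch j hj a ha, h_unch j hj b hb]
        exact hc a b hab
  · intro i hi1 him
    rw [h_val (m+1) le_rfl i (by omega)]
    simp only [hd]
    rw [if_neg (by omega : ¬ i = 0)]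
end

section
/- Let P = v_0, ..., v_m (m ≥ 1) be an induced path in G with maximum degree Δ, c a proper (Δ+1)-coloring where v_0 is non-frozen and v_1,...,v_m frozen. After performing the ladder recoloring along P, the endpoint v_m is non-frozen in the resulting coloring. -/
open Classical in
noncomputable def lad {V : Type*} {k : ℕ} (m : ℕ) (v : ℕ → V) (f : ℕ → Fin k)
    (c : V → Fin k) : ℕ → V → Fin k :=
  fun n x => if h : ∃ i, i ≤ m ∧ i < n ∧ x = v i then f h.choose else c x

lemma lad_on {V : Type*} {k m : ℕ} {v : ℕ → V} (f : ℕ → Fin k) (c : V → Fin k)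
    (hinj : ∀ i j : ℕ, i ≤ m → j ≤ m → v i = v j → i = j)
    {i n : ℕ} (him : i ≤ m) (hin : i < n) :
    lad m v f c n (v i) = f i := by
  have h : ∃ i', i' ≤ m ∧ i' < n ∧ v i = v i' := ⟨i, him, hin, rfl⟩
  rw [lad, dif_pos h]
  congr 1
  exact hinj _ _ h.choose_spec.1 him h.choose_spec.2.2.symm

lemma lad_off {V : Type*} {k m : ℕ} {v : ℕ → V} (f : ℕ → Fin k) (c : V → Fin k)
    {x : V} {n : ℕ} (h : ∀ i, i ≤ m → i < n → x ≠ v i) :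
    lad m v f c n x = c x := by
  rw [lad, dif_neg]
  rintro ⟨i, h1, h2, h3⟩
  exact h i h1 h2 h3

lemma frozen_inj {V : Type*} [Fintype V] [DecidableEq V] (G : SimpleGraph V)
    [DecidableRel G.Adj] (Δ : ℕ) (hΔ : G.maxDegree = Δ) (c : V → Fin (Δ + 1))
    (u : V) (hfr : ∀ col : Fin (Δ + 1), ∃ w : V, (w = u ∨ G.Adj u w) ∧ c w = col) :
    ∀ w w', (w = u ∨ G.Adj u w) → (w' = u ∨ G.Adj u w') → w ≠ w' → c w ≠ c w' := by
  set S : Finset V := insert u (G.neighborFinset u) with hS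
  have hmem : ∀ w, (w = u ∨ G.Adj u w) → w ∈ S := by
    intro w hw
    rcases hw with h | h
    · rw [h]; exact Finset.mem_insert_self u _
    · exact Finset.mem_insert_of_mem ((G.mem_neighborFinset u w).mpr h)
  have hcardS : S.card ≤ Δ + 1 := by
    calc S.card ≤ (G.neighborFinset u).card + 1 := Finset.card_insert_le _ _
    _ = G.degree u + 1 := by rw [G.card_neighborFinset_eq_degree]
    _ ≤ Δ + 1 := by have := G.degree_le_maxDegree u; omega
  have himg : S.image c = Finset.univ := by
    apply Finset.eq_univ_of_forall
    intro col
    obtain ⟨w, hw, hcw⟩ := hfr col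
    exact Finset.mem_image.mpr ⟨w, hmem w hw, hcw⟩
  have hinj : Set.InjOn c S := by
    apply Finset.injOn_of_card_image_eq
    have h1 : (S.image c).card = Δ + 1 := by rw [himg]; simp
    have h2 : (S.image c).card ≤ S.card := Finset.card_image_le
    omega
  intro w w' hw hw' hne hcc
  exact hne (hinj (hmem w hw) (hmem w' hw') hcc)

theorem stmt4 {V : Type*} [Fintype V] [DecidableEq V] (G : SimpleGraph V)
    [DecidableRel G.Adj] (Δ m : ℕ) (hΔ : G.maxDegree = Δ) (hm : 1 ≤ m)
    (v : ℕ → V)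
    (hinj : ∀ i j : ℕ, i ≤ m → j ≤ m → v i = v j → i = j)
    (hind : ∀ i j : ℕ, i ≤ m → j ≤ m →
      (G.Adj (v i) (v j) ↔ (i + 1 = j ∨ j + 1 = i)))
    (c : V → Fin (Δ + 1)) (hc : ∀ a b : V, G.Adj a b → c a ≠ c b)
    (h0 : ¬ (∀ col : Fin (Δ + 1), ∃ w : V, (w = v 0 ∨ G.Adj (v 0) w) ∧ c w = col))
    (hfr : ∀ i : ℕ, 1 ≤ i → i ≤ m →
      ∀ col : Fin (Δ + 1), ∃ w : V, (w = v i ∨ G.Adj (v i) w) ∧ c w = col) :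
    ∃ cs : ℕ → V → Fin (Δ + 1),
      cs 0 = c ∧
      (∀ j : ℕ, j ≤ m → ∀ x : V, x ≠ v j → cs (j + 1) x = cs j x) ∧
      (∀ j : ℕ, j ≤ m + 1 → ∀ a b : V, G.Adj a b → cs j a ≠ cs j b) ∧
      (∀ i : ℕ, 1 ≤ i → i ≤ m → cs (m + 1) (v i) = c (v (i - 1))) ∧
      ¬ (∀ col : Fin (Δ + 1), ∃ w : V,
          (w = v m ∨ G.Adj (v m) w) ∧ cs (m + 1) w = col) := by
  -- missing color b at v 0
  push_neg at h0
  obtain ⟨b, hb⟩ := h0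
  have hb' : ∀ w : V, (w = v 0 ∨ G.Adj (v 0) w) → c w ≠ b := by
    intro w hw
    exact hb w hw
  -- injectivity of c on closed neighborhoods of frozen vertices
  have hFinj : ∀ i : ℕ, 1 ≤ i → i ≤ m → ∀ w w',
      (w = v i ∨ G.Adj (v i) w) → (w' = v i ∨ G.Adj (v i) w') → w ≠ w' →
      c w ≠ c w' :=
    fun i h1 h2 => frozen_inj G Δ hΔ c (v i) (hfr i h1 h2)
  set f : ℕ → Fin (Δ + 1) := fun i => if i = 0 then b else c (v (i - 1)) with hf
  have hfpos : ∀ i : ℕ, 1 ≤ i → f i = c (v (i - 1)) := by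
    intro i h
    simp only [hf, if_neg (by omega : ¬ i = 0)]
  set cs : ℕ → V → Fin (Δ + 1) := lad m v f c with hcs
  have hzero : cs 0 = c := by
    funext x
    exact lad_off f c (fun i _ h2 _ => by omega)
  have hchg : ∀ j : ℕ, j ≤ m → ∀ x : V, x ≠ v j → cs (j + 1) x = cs j x := by
    intro j hj x hx
    by_cases hcase : ∃ i, i ≤ m ∧ i < j ∧ x = v i
    · obtain ⟨i, him, hij, rfl⟩ := hcase
      rw [hcs, lad_on f c hinj him (by omega), lad_on f c hinj him hij]
    · have hnone : ∀ i, i ≤ m → i < j + 1 → x ≠ v i := by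
        intro i h1 h2 h3
        rcases Nat.lt_or_ge i j with h | h
        · exact hcase ⟨i, h1, h, h3⟩
        · have : i = j := by omega
          exact hx (this ▸ h3)
      rw [hcs]
      rw [lad_off f c hnone, lad_off f c (fun i h1 h2 h3 => hnone i h1 (by omega) h3)]
  -- adjacency along the path
  have hadjp : ∀ i : ℕ, i + 1 ≤ m → G.Adj (v i) (v (i + 1)) := by
    intro i h
    exact (hind i (i + 1) (by omega) h).mpr (Or.inl rfl)
  -- core lemma: new color of v j differs from colors of its neighbors at time j+1
  have hcore : ∀ j : ℕ, j ≤ m → ∀ w : V, G.Adj (v j) w → f j ≠ cs (j + 1) w := by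
    intro j hj w hadj
    have hwj : w ≠ v j := fun h => (G.ne_of_adj hadj) h.symm
    by_cases hcase : ∃ i, i ≤ m ∧ w = v i
    · obtain ⟨i, him, rfl⟩ := hcase
      rcases (hind j i hj him).mp hadj with h | h
      · -- i = j + 1 : not yet recolored
        have hval : cs (j + 1) (v i) = c (v i) := by
          apply lad_off
          intro i' h1 h2 h3
          have := hinj i i' him h1 h3
          omega
        rw [hval]
        rcases Nat.eq_zero_or_pos j with rfl | hjpos
        · -- f 0 = b, and v i adjacent to v 0
          simp only [hf, if_pos rfl]
          exact fun hh => hb' (v i) (Or.inr hadj) hh.symm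
        · have hfj : f j = c (v (j - 1)) := hfpos j hjpos
          rw [hfj]
          apply hFinj j hjpos hj (v (j - 1)) (v i)
          · refine Or.inr ?_
            have := hadjp (j - 1) (by omega)
            have hj1 : j - 1 + 1 = j := by omega
            rw [hj1] at this
            exact this.symm
          · exact Or.inr hadj
          · intro hh
            have := hinj (j - 1) i (by omega) him hh
            omega
      · -- i + 1 = j : already recolored to f i
        have hval : cs (j + 1) (v i) = f i := lad_on f c hinj him (by omega)
        rw [hval]
        have hfj : f j = c (v i) := by
          have h1 : j - 1 = i := by omega
          rw [hfpos j (by omega), h1]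
        rw [hfj]
        rcases Nat.eq_zero_or_pos i with rfl | hipos
        · simp only [hf, if_pos rfl]
          exact fun hh => hb' (v 0) (Or.inl rfl) hh
        · have hfi : f i = c (v (i - 1)) := hfpos i hipos
          rw [hfi]
          have hadj' : G.Adj (v (i - 1)) (v i) := by
            have := hadjp (i - 1) (by omega)
            have hi1 : i - 1 + 1 = i := by omega
            rw [hi1] at this
            exact this
          exact fun hh => hc _ _ hadj' hh.symm
    · -- w is off the path
      have hval : cs (j + 1) w = c w := by
        apply lad_off
        intro i h1 _ h3
        exact hcase ⟨i, h1, h3⟩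
      rw [hval]
      rcases Nat.eq_zero_or_pos j with rfl | hjpos
      · simp only [hf, if_pos rfl]
        exact fun hh => hb' w (Or.inr hadj) hh.symm
      · have hfj : f j = c (v (j - 1)) := hfpos j hjpos
        rw [hfj]
        apply hFinj j hjpos hj (v (j - 1)) w
        · refine Or.inr ?_
          have := hadjp (j - 1) (by omega)
          have hj1 : j - 1 + 1 = j := by omega
          rw [hj1] at this
          exact this.symm
        · exact Or.inr hadj
        · intro hh
          exact hcase ⟨j - 1, by omega, hh.symm⟩
  -- properness
  have hproper : ∀ j : ℕ, j ≤ m + 1 → ∀ a b' : V, G.Adj a b' → cs j a ≠ cs j b' := by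
    intro j
    induction j with
    | zero => intro _ a b' hadj; rw [hzero]; exact hc a b' hadj
    | succ j ih =>
      intro hj a b' hadj
      have hj' : j ≤ m := by omega
      by_cases ha : a = v j
      · subst ha
        have hb'' : b' ≠ v j := fun h => (G.ne_of_adj hadj) h.symm
        have : cs (j + 1) (v j) = f j := lad_on f c hinj hj' (by omega)
        rw [this]
        exact hcore j hj' b' hadj
      · by_cases hbv : b' = v j
        · subst hbv
          have : cs (j + 1) (v j) = f j := lad_on f c hinj hj' (by omega)
          rw [this]
          exact fun hh => hcore j hj' a hadj.symm hh.symm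
        · rw [hchg j hj' a ha, hchg j hj' b' hbv]
          exact ih (by omega) a b' hadj
  -- final colors
  have hfin : ∀ i : ℕ, 1 ≤ i → i ≤ m → cs (m + 1) (v i) = c (v (i - 1)) := by
    intro i h1 h2
    rw [hcs, lad_on f c hinj h2 (by omega), hfpos i h1]
  refine ⟨cs, hzero, hchg, hproper, hfin, ?_⟩
  -- v m is non-frozen at the end: color c (v m) is missing
  intro hall
  obtain ⟨w, hw, hcw⟩ := hall (c (v m))
  have hadjm : G.Adj (v (m - 1)) (v m) := by
    have := hadjp (m - 1) (by omega)
    have h1 : m - 1 + 1 = m := by omega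
    rw [h1] at this
    exact this
  rcases hw with rfl | hadj
  · rw [hfin m hm le_rfl] at hcw
    exact hc _ _ hadjm hcw
  · by_cases hcase : ∃ i, i ≤ m ∧ w = v i
    · obtain ⟨i, him, rfl⟩ := hcase
      rcases (hind m i le_rfl him).mp hadj with h | h
      · omega
      · -- i + 1 = m
        have hval : cs (m + 1) (v i) = f i := lad_on f c hinj him (by omega)
        rw [hval] at hcw
        rcases Nat.eq_zero_or_pos i with rfl | hipos
        · -- m = 1, f 0 = b
          simp only [hf, if_pos rfl] at hcw
          exact hb' (v m) (Or.inr ((hind 0 m (by omega) le_rfl).mpr (Or.inl h))) hcw.symm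
        · have hfi : f i = c (v (i - 1)) := hfpos i hipos
          rw [hfi] at hcw
          -- v (i-1) and v m are distinct neighbors of frozen v i
          apply hFinj i hipos him (v (i - 1)) (v m) _ _ _ hcw
          · refine Or.inr ?_
            have := hadjp (i - 1) (by omega)
            have hi1 : i - 1 + 1 = i := by omega
            rw [hi1] at this
            exact this.symm
          · exact Or.inr hadj.symm
          · intro hh
            have := hinj (i - 1) m (by omega) le_rfl hh
            omega
    · have hval : cs (m + 1) w = c w := by
        apply lad_off
        intro i h1 _ h3
        exact hcase ⟨i, h1, h3⟩
      rw [hval] at hcw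
      exact hc _ _ hadj.symm hcw
end

section
/- For any two proper k-colorings σ, η of a graph G with maximum degree Δ and k ≥ 2Δ+2, there exists a parallel recoloring schedule of length at most 4(Δ+1) transforming σ into η, where at each parallel step the set of recolored vertices is an independent set and the coloring stays proper throughout. -/
/-!
Fix a proper colouring `g` of `G` with the `Δ + 1` colours `0, …, Δ`, and call the colours
`Δ + 1, …, k - 1` high; there are at least `Δ + 1` of them. Every proper colouring `c` can be
moved to `g` in `2 (Δ + 1)` parallel steps. First the colour classes of `g` are visited one at
a time, and each vertex of the current class moves to a high colour that none of its at most `Δ`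
neighbours is using. Then the classes are visited again, and each vertex moves from its high
colour to its colour under `g`: the high and low colours never clash. Going from `σ` to `g` and
then following the schedule from `η` to `g` backwards gives `4 (Δ + 1)` steps.
-/

open Finset

namespace SimpleGraph

variable {V α : Type*} (G : SimpleGraph V)

def IsProperColoring (c : V → α) : Prop :=
  ∀ ⦃u v⦄, G.Adj u v → c u ≠ c v

def ParallelRecolors (ℓ : ℕ) (c c' : V → α) : Prop :=
  ∃ cs : ℕ → V → α, cs 0 = c ∧ cs ℓ = c' ∧ (∀ i ≤ ℓ, G.IsProperColoring (cs i)) ∧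
    ∀ i < ℓ, G.IsIndepSet {v | cs (i + 1) v ≠ cs i v}

variable {G}

theorem IsProperColoring.isIndepSet_preimage_singleton {β : Type*} {g : V → β}
    (hg : G.IsProperColoring g) (b : β) : G.IsIndepSet (g ⁻¹' {b}) :=
  fun _ hu _ hv _ hadj => hg hadj (hu.trans hv.symm)

namespace ParallelRecolors

theorem refl {c : V → α} (hc : G.IsProperColoring c) : G.ParallelRecolors 0 c c :=
  ⟨fun _ => c, rfl, rfl, fun _ _ => hc, fun _ hi => absurd hi (Nat.not_lt_zero _)⟩

theorem isProperColoring_right {ℓ : ℕ} {c c' : V → α} (h : G.ParallelRecolors ℓ c c') :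
    G.IsProperColoring c' := by
  obtain ⟨cs, -, hℓ, hproper, -⟩ := h
  exact hℓ ▸ hproper ℓ le_rfl

theorem one_of_eqOn_compl {c c' : V → α} (hc : G.IsProperColoring c)
    (hc' : G.IsProperColoring c') {s : Set V} (hs : G.IsIndepSet s)
    (heq : Set.EqOn c' c sᶜ) : G.ParallelRecolors 1 c c' := by
  refine ⟨fun i => if i = 0 then c else c', rfl, rfl, fun i _ => ?_, fun i hi => ?_⟩
  · dsimp only
    split_ifs
    exacts [hc, hc']
  · obtain rfl : i = 0 := by omega
    exact hs.mono fun v hv => by_contra fun hvs => hv (heq hvs)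

theorem symm {ℓ : ℕ} {c c' : V → α} (h : G.ParallelRecolors ℓ c c') :
    G.ParallelRecolors ℓ c' c := by
  obtain ⟨cs, h0, hℓ, hproper, hindep⟩ := h
  refine ⟨fun i => cs (ℓ - i), by simpa using hℓ, by simpa using h0,
    fun i _ => hproper _ (Nat.sub_le ℓ i), fun i hi => ?_⟩
  have hstep : ℓ - i = ℓ - (i + 1) + 1 := by omega
  simp only [hstep, ne_comm (a := cs (ℓ - (i + 1)) _)]
  exact hindep _ (by omega)

theorem trans {a b : ℕ} {c c' c'' : V → α} (h : G.ParallelRecolors a c c')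
    (h' : G.ParallelRecolors b c' c'') : G.ParallelRecolors (a + b) c c'' := by
  obtain ⟨cs, h0, ha, hproper, hindep⟩ := h
  obtain ⟨cs', h0', hb, hproper', hindep'⟩ := h'
  set ds : ℕ → V → α := fun i => if i < a then cs i else cs' (i - a)
  have hds_le : ∀ i ≤ a, ds i = cs i := by
    intro i hi
    rcases hi.lt_or_eq with hi | rfl
    · exact if_pos hi
    · simp [ds, ha, h0']
  have hds_ge : ∀ i, a ≤ i → ds i = cs' (i - a) := fun i hi => if_neg (by omega)
  refine ⟨ds, (hds_le 0 (Nat.zero_le a)).trans h0, ?_, fun i hi => ?_, fun i hi => ?_⟩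
  · rw [hds_ge _ (Nat.le_add_right a b), Nat.add_sub_cancel_left, hb]
  · rcases le_total i a with hia | hai
    · rw [hds_le i hia]; exact hproper i hia
    · rw [hds_ge i hai]; exact hproper' _ (by omega)
  · rcases lt_or_ge i a with hia | hai
    · rw [hds_le i hia.le, hds_le (i + 1) hia]; exact hindep i hia
    · rw [hds_ge i hai, hds_ge (i + 1) (by omega), Nat.sub_add_comm hai]
      exact hindep' _ (by omega)

end ParallelRecolors

theorem parallelRecolors_of_adj_ne {m : ℕ} {g : V → Fin m} (hg : G.IsProperColoring g)
    {c c' : V → α} (hc : G.IsProperColoring c) (hc' : G.IsProperColoring c')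
    (hcc' : ∀ ⦃u v⦄, G.Adj u v → c u ≠ c' v) : G.ParallelRecolors m c c' := by
  set mix : ℕ → V → α := fun j v => if (g v : ℕ) < j then c' v else c v
  have hmix : ∀ j, G.IsProperColoring (mix j) := by
    intro j u v hadj
    by_cases hu : (g u : ℕ) < j <;> by_cases hv : (g v : ℕ) < j <;>
      simp only [mix, hu, hv, if_true, if_false]
    · exact hc' hadj
    · exact (hcc' hadj.symm).symm
    · exact hcc' hadj
    · exact hc hadj
  suffices ∀ j ≤ m, G.ParallelRecolors j c (mix j) by
    convert this m le_rfl
    funext v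
    simp [mix]
  intro j
  induction j with
  | zero =>
    intro _
    convert ParallelRecolors.refl hc
    funext v
    simp [mix]
  | succ j ih =>
    intro hj
    refine (ih (by omega)).trans (.one_of_eqOn_compl (hmix j) (hmix (j + 1))
      (hg.isIndepSet_preimage_singleton ⟨j, hj⟩) fun v hv => ?_)
    have hne : (g v : ℕ) ≠ j := fun h => hv (Fin.ext h)
    have hiff : (g v : ℕ) < j + 1 ↔ (g v : ℕ) < j := by omega
    simp only [mix, hiff]

section Degree

variable [Fintype V] [DecidableRel G.Adj]

theorem exists_mem_forall_adj_ne (f : V → α) {S : Finset α} (hS : G.maxDegree < #S) (v : V) :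
    ∃ x ∈ S, ∀ u, G.Adj v u → x ≠ f u := by
  classical
  have hcard : #((G.neighborFinset v).image f) < #S :=
    calc #((G.neighborFinset v).image f) ≤ G.degree v := card_image_le
      _ ≤ G.maxDegree := G.degree_le_maxDegree v
      _ < #S := hS
  obtain ⟨x, hxS, hx⟩ := exists_mem_notMem_of_card_lt_card hcard
  exact ⟨x, hxS, fun u hu hxu => hx (mem_image.2 ⟨u, (G.mem_neighborFinset v u).2 hu, hxu.symm⟩)⟩

theorem exists_isProperColoring_fin {m : ℕ} (hm : G.maxDegree < m) :
    ∃ g : V → Fin m, G.IsProperColoring g := by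
  classical
  have hpos : 0 < m := by omega
  suffices ∀ s : Finset V, ∃ g : V → Fin m, ∀ u ∈ s, ∀ v ∈ s, G.Adj u v → g u ≠ g v by
    obtain ⟨g, hg⟩ := this univ
    exact ⟨g, fun u v hadj => hg u (mem_univ u) v (mem_univ v) hadj⟩
  intro s
  induction s using Finset.induction_on with
  | empty => exact ⟨fun _ => ⟨0, hpos⟩, by simp⟩
  | insert a s _ ih =>
    obtain ⟨g, hg⟩ := ih
    obtain ⟨x, -, hx⟩ := G.exists_mem_forall_adj_ne g (S := univ) (by simpa using hm) a
    refine ⟨Function.update g a x, fun u hu v hv hadj => ?_⟩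
    rw [mem_insert] at hu hv
    by_cases hua : u = a <;> by_cases hva : v = a
    · exact (G.irrefl (hua ▸ hva ▸ hadj)).elim
    · subst hua
      rw [Function.update_self, Function.update_of_ne hva]
      exact hx v hadj
    · subst hva
      rw [Function.update_of_ne hua, Function.update_self]
      exact (hx u hadj.symm).symm
    · rw [Function.update_of_ne hua, Function.update_of_ne hva]
      exact hg u (hu.resolve_left hua) v (hv.resolve_left hva) hadj

theorem exists_parallelRecolors_one_into {c : V → α} (hc : G.IsProperColoring c) {s : Set V}
    (hs : G.IsIndepSet s) {S : Finset α} (hS : G.maxDegree < #S) :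
    ∃ c', G.ParallelRecolors 1 c c' ∧ (∀ v ∈ s, c' v ∈ S) ∧ Set.EqOn c' c sᶜ := by
  classical
  choose x hxS hx using G.exists_mem_forall_adj_ne c hS
  set c' : V → α := fun v => if v ∈ s then x v else c v
  have hc' : G.IsProperColoring c' := by
    intro u v hadj
    by_cases hu : u ∈ s <;> by_cases hv : v ∈ s <;> simp only [c', hu, hv, if_true, if_false]
    · exact (hs hu hv hadj.ne hadj).elim
    · exact hx u v hadj
    · exact (hx v u hadj.symm).symm
    · exact hc hadj
  have heq : Set.EqOn c' c sᶜ := fun _ hv => if_neg hv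
  exact ⟨c', .one_of_eqOn_compl hc hc' hs heq, fun v hv => by simp [c', hv, hxS], heq⟩

theorem exists_parallelRecolors_into {m : ℕ} {g : V → Fin m} (hg : G.IsProperColoring g)
    {c : V → α} (hc : G.IsProperColoring c) {S : Finset α} (hS : G.maxDegree < #S) :
    ∃ c', G.ParallelRecolors m c c' ∧ ∀ v, c' v ∈ S := by
  suffices ∀ j ≤ m, ∃ c', G.ParallelRecolors j c c' ∧ ∀ v, (g v : ℕ) < j → c' v ∈ S by
    obtain ⟨c', h, hc'S⟩ := this m le_rfl
    exact ⟨c', h, fun v => hc'S v (g v).isLt⟩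
  intro j
  induction j with
  | zero => exact fun _ => ⟨c, .refl hc, by simp⟩
  | succ j ih =>
    intro hj
    obtain ⟨c₁, h₁, hc₁S⟩ := ih (by omega)
    obtain ⟨c₂, h₂, hc₂S, heq⟩ := exists_parallelRecolors_one_into h₁.isProperColoring_right
      (hg.isIndepSet_preimage_singleton ⟨j, hj⟩) hS
    refine ⟨c₂, h₁.trans h₂, fun v hv => ?_⟩
    by_cases hvj : g v = ⟨j, hj⟩
    · exact hc₂S v hvj
    · have hne : (g v : ℕ) ≠ j := fun h => hvj (Fin.ext h)
      rw [heq hvj]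
      exact hc₁S v (by omega)

end Degree

end SimpleGraph

open SimpleGraph

theorem stmt6_general {V : Type*} [Fintype V] (G : SimpleGraph V)
    [DecidableRel G.Adj] (Δ k : ℕ) (hΔ : G.maxDegree = Δ) (hk : 2 * Δ + 2 ≤ k)
    (σ η : V → Fin k)
    (hσ : ∀ u v : V, G.Adj u v → σ u ≠ σ v)
    (hη : ∀ u v : V, G.Adj u v → η u ≠ η v) :
    ∃ (ℓ : ℕ) (cs : ℕ → V → Fin k),
      ℓ ≤ 4 * (Δ + 1) ∧
      cs 0 = σ ∧ cs ℓ = η ∧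
      (∀ i : ℕ, i ≤ ℓ → ∀ u v : V, G.Adj u v → cs i u ≠ cs i v) ∧
      (∀ i : ℕ, i < ℓ → ∀ x y : V,
        cs (i + 1) x ≠ cs i x → cs (i + 1) y ≠ cs i y → ¬ G.Adj x y) := by
  obtain ⟨g, hg⟩ := G.exists_isProperColoring_fin (m := Δ + 1) (by omega)
  set low : V → Fin k := fun v => Fin.castLE (by omega) (g v)
  have hlow : G.IsProperColoring low := fun u v hadj h => hg hadj (Fin.castLE_injective _ h)
  set high : Finset (Fin k) := Ici ⟨Δ + 1, by omega⟩
  have hhigh : G.maxDegree < #high := by simp only [high, Fin.card_Ici]; omega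
  have toLow : ∀ c : V → Fin k, G.IsProperColoring c →
      G.ParallelRecolors ((Δ + 1) + (Δ + 1)) c low := by
    intro c hc
    obtain ⟨c', hcc', hc'high⟩ := exists_parallelRecolors_into hg hc hhigh
    refine hcc'.trans (parallelRecolors_of_adj_ne hg hcc'.isProperColoring_right hlow
      fun u v _ h => ?_)
    have hu : Δ + 1 ≤ (c' u : ℕ) := Fin.le_iff_val_le_val.1 (mem_Ici.1 (hc'high u))
    have hv : (low v : ℕ) < Δ + 1 := (g v).isLt
    omega
  obtain ⟨cs, h0, hℓ, hproper, hindep⟩ := (toLow σ hσ).trans (toLow η hη).symm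
  exact ⟨_, cs, by omega, h0, hℓ, fun i hi u v hadj => hproper i hi hadj,
    fun i hi x y hx hy hadj => hindep i hi hx hy hadj.ne hadj⟩

theorem stmt6 {V : Type*} [Fintype V] [DecidableEq V] (G : SimpleGraph V)
    [DecidableRel G.Adj] (Δ k : ℕ) (hΔ : G.maxDegree = Δ) (hk : 2 * Δ + 2 ≤ k)
    (σ η : V → Fin k)
    (hσ : ∀ u v : V, G.Adj u v → σ u ≠ σ v)
    (hη : ∀ u v : V, G.Adj u v → η u ≠ η v) :
    ∃ (ℓ : ℕ) (cs : ℕ → V → Fin k),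
      ℓ ≤ 4 * (Δ + 1) ∧
      cs 0 = σ ∧ cs ℓ = η ∧
      (∀ i : ℕ, i ≤ ℓ → ∀ u v : V, G.Adj u v → cs i u ≠ cs i v) ∧
      (∀ i : ℕ, i < ℓ → ∀ x y : V,
        cs (i + 1) x ≠ cs i x → cs (i + 1) y ≠ cs i y → ¬ G.Adj x y) :=
  stmt6_general G Δ k hΔ hk σ η hσ hη
end

section
/- Let G be a graph admitting a proper k-coloring c and a partition of its vertices into layers L_1, ..., L_t such that each vertex in L_i has at most d neighbors in L_i ∪ L_{i+1} ∪ ... ∪ L_t. Then G admits a d-degeneracy ordering consisting of at most t·k consecutive independent sets. -/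
theorem stmt8 {V : Type*} [Fintype V] [DecidableEq V] (G : SimpleGraph V)
    [DecidableRel G.Adj] (d t k : ℕ)
    (lay : V → ℕ) (hlay : ∀ v : V, 1 ≤ lay v ∧ lay v ≤ t)
    (hdeg : ∀ v : V, Set.ncard {w : V | G.Adj v w ∧ lay v ≤ lay w} ≤ d)
    (c : V → Fin k) (hc : ∀ u v : V, G.Adj u v → c u ≠ c v) :
    ∃ (e : Fin (Fintype.card V) ≃ V) (b : Fin (Fintype.card V) → ℕ),
      Monotone b ∧
      (∀ i, b i < t * k) ∧
      (∀ i, Set.ncard {j : Fin (Fintype.card V) | G.Adj (e i) (e j) ∧ i < j} ≤ d) ∧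
      (∀ i j, b i = b j → ¬ G.Adj (e i) (e j)) := by
  set key : V → ℕ := fun v => (lay v - 1) * k + (c v : ℕ) with hkey
  have e0 : Fin (Fintype.card V) ≃ V := (Fintype.equivFin V).symm
  set σ := Tuple.sort (key ∘ e0) with hσ
  refine ⟨(σ : Equiv.Perm _).trans e0, fun i => key (e0 (σ i)), ?_, ?_, ?_, ?_⟩
  · exact Tuple.monotone_sort (key ∘ e0)
  · intro i
    have hk : (c (e0 (σ i)) : ℕ) < k := (c (e0 (σ i))).isLt
    have h2 := (hlay (e0 (σ i))).2
    have h1 := (hlay (e0 (σ i))).1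
    simp only [hkey]
    calc (lay (e0 (σ i)) - 1) * k + (c (e0 (σ i)) : ℕ)
        < (lay (e0 (σ i)) - 1) * k + k := by omega
      _ = (lay (e0 (σ i)) - 1 + 1) * k := by ring
      _ ≤ t * k := Nat.mul_le_mul_right k (by omega)
  · intro i
    set e := (σ : Equiv.Perm _).trans e0 with he
    have hdiv : ∀ v : V, key v / k = lay v - 1 := by
      intro v
      have hk : (c v : ℕ) < k := (c v).isLt
      simp only [hkey]
      rw [Nat.mul_comm, Nat.mul_add_div (by omega : 0 < k), Nat.div_eq_of_lt hk]; omega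
    have hsub : e '' {j : Fin (Fintype.card V) | G.Adj (e i) (e j) ∧ i < j}
        ⊆ {w : V | G.Adj (e i) w ∧ lay (e i) ≤ lay w} := by
      rintro _ ⟨j, ⟨hadj, hij⟩, rfl⟩
      refine ⟨hadj, ?_⟩
      have hmono : key (e i) ≤ key (e j) := by
        have := Tuple.monotone_sort (key ∘ e0) hij.le
        simpa [he] using this
      have := Nat.div_le_div_right (c := k) hmono
      rw [hdiv, hdiv] at this
      have h1 := (hlay (e i)).1
      have h2 := (hlay (e j)).1
      omega
    calc Set.ncard {j : Fin (Fintype.card V) | G.Adj (e i) (e j) ∧ i < j}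
        = Set.ncard (e '' {j : Fin (Fintype.card V) | G.Adj (e i) (e j) ∧ i < j}) :=
          (Set.ncard_image_of_injective _ e.injective).symm
      _ ≤ Set.ncard {w : V | G.Adj (e i) w ∧ lay (e i) ≤ lay w} :=
          Set.ncard_le_ncard hsub (Set.toFinite _)
      _ ≤ d := hdeg (e i)
  · intro i j hb hadj
    set e := (σ : Equiv.Perm _).trans e0 with he
    have hk : 0 < k := Nat.pos_of_ne_zero (by
      rintro rfl; exact (c (e i)).elim0)
    have hmod : ∀ v : V, key v % k = (c v : ℕ) := by
      intro v
      simp only [hkey]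
      rw [Nat.mul_comm, Nat.mul_add_mod, Nat.mod_eq_of_lt (c v).isLt]
    have : (c (e i) : ℕ) = (c (e j) : ℕ) := by
      rw [← hmod, ← hmod]
      exact congrArg (· % k) hb
    exact hc (e i) (e j) hadj (Fin.ext this)
end

section
/- Let G be a graph with an ordering τ of its vertices composed of t consecutive independent sets, let d = max over vertices of the forward degree d⁺_τ(v), and let (L_v) be lists of colors with |L_v| ≥ d⁺_τ(v) + 2 for all v. Then for any two proper list-colorings σ, η compatible with the lists, there exists a recoloring sequence from σ to η, each step recoloring one vertex to a color in its list while keeping the coloring proper, of total length at most n·k^{t+1}, where k = |∪_v L_v| and n = |V(G)|. -/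
/-!
Let `ℓ v` be the index of the block containing `v` and `k = |⋃ L_v|`. We recolor the blocks from
the last one down. Given a recoloring of the blocks `s + 1, …, t - 1` that ignores the lower
blocks, we lift it to the blocks `≥ s`: just before a vertex `u` moves to a color `c`, every
neighbor `v` of `u` in block `s` that currently has color `c` moves to a color of `L_v` different
from `c` and from the colors of its forward neighbors, which exist since
`|L_v| ≥ d⁺(v) + 2` and block `s` is independent. Afterwards every vertex of block `s` moves to
its final color. A vertex `v` of block `s` therefore moves at most
`d⁺(v) k ^ (t - s - 1) + 1 ≤ k ^ (t - s)` times, so at most `n k ^ t` moves are made in total.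
-/

namespace ListRecoloring

open Finset

lemma exists_mem_ne_and_forall_ne {α β : Type*} [DecidableEq β] {A : Finset β} {F : Finset α}
    (f : α → β) (c : β) (h : #F + 1 < #A) : ∃ d ∈ A, d ≠ c ∧ ∀ w ∈ F, d ≠ f w := by
  have hcard : #(insert c (F.image f)) < #A :=
    calc #(insert c (F.image f)) ≤ #(F.image f) + 1 := card_insert_le _ _
      _ ≤ #F + 1 := by gcongr; exact card_image_le
      _ < #A := h
  obtain ⟨d, hdA, hd⟩ := exists_mem_notMem_of_card_lt_card hcard
  exact ⟨d, hdA, fun hdc => hd (hdc ▸ mem_insert_self _ _),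
    fun w hw hdw => hd (mem_insert_of_mem (mem_image.2 ⟨w, hw, hdw.symm⟩))⟩

lemma mul_pow_add_one_le_pow_succ {a k : ℕ} (h : a + 2 ≤ k) (n : ℕ) :
    a * k ^ n + 1 ≤ k ^ (n + 1) := by
  have : 1 ≤ k ^ n := Nat.one_le_pow _ _ (by omega)
  calc a * k ^ n + 1 ≤ (a + 2) * k ^ n := by nlinarith
    _ ≤ k * k ^ n := by gcongr
    _ = k ^ (n + 1) := by ring

variable {V : Type*} (G : SimpleGraph V) (ℓ : V → ℕ) (L : V → Finset ℕ)

/- `ℓ v` is the index of the independent block containing `v`; `ProperFrom G ℓ s f` says that `f`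
is proper on the subgraph induced by the blocks `s, s + 1, …`. -/
def ProperFrom (s : ℕ) (f : V → ℕ) : Prop :=
  ∀ u v, G.Adj u v → s ≤ ℓ u → s ≤ ℓ v → f u ≠ f v

def forwardNeighborFinset [Fintype V] [DecidableRel G.Adj] (v : V) : Finset V :=
  {w | G.Adj v w ∧ ℓ v < ℓ w}

variable {G ℓ L}

lemma properFrom_zero {f : V → ℕ} : ProperFrom G ℓ 0 f ↔ ∀ u v, G.Adj u v → f u ≠ f v := by
  simp [ProperFrom]

lemma ProperFrom.mono {s s' : ℕ} (hs : s ≤ s') {f : V → ℕ} (h : ProperFrom G ℓ s f) :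
    ProperFrom G ℓ s' f :=
  fun u v huv hu hv => h u v huv (hs.trans hu) (hs.trans hv)

lemma ProperFrom.congr {s : ℕ} {f g : V → ℕ} (h : ProperFrom G ℓ s f)
    (hfg : ∀ v, s ≤ ℓ v → f v = g v) : ProperFrom G ℓ s g := by
  intro u v huv hu hv
  rw [← hfg u hu, ← hfg v hv]
  exact h u v huv hu hv

lemma mem_forwardNeighborFinset [Fintype V] [DecidableRel G.Adj] {v w : V} :
    w ∈ forwardNeighborFinset G ℓ v ↔ G.Adj v w ∧ ℓ v < ℓ w := by
  simp [forwardNeighborFinset]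

lemma mem_forwardNeighborFinset_of_le [Fintype V] [DecidableRel G.Adj]
    (hnadj : ∀ u v, ℓ u = ℓ v → ¬ G.Adj u v) {v w : V}
    (hvw : G.Adj v w) (hle : ℓ v ≤ ℓ w) : w ∈ forwardNeighborFinset G ℓ v :=
  mem_forwardNeighborFinset.2 ⟨hvw, hle.lt_of_ne fun h => hnadj v w h hvw⟩

lemma card_forwardNeighborFinset_le_ncard [Fintype V] [DecidableRel G.Adj] {ι : Type*}
    [LinearOrder ι] [Finite ι] (e : ι ≃ V) {b : ι → ℕ} (hb : Monotone b) (i : ι) :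
    #(forwardNeighborFinset G (fun v => b (e.symm v)) (e i)) ≤
      {j | G.Adj (e i) (e j) ∧ i < j}.ncard := by
  rw [← card_map e.symm.toEmbedding, ← Set.ncard_coe_finset]
  refine Set.ncard_le_ncard fun j hj => ?_
  obtain ⟨w, hw, rfl⟩ := mem_map.1 hj
  obtain ⟨hiw, hlt⟩ := mem_forwardNeighborFinset.1 hw
  simp only [Equiv.symm_apply_apply] at hlt
  exact ⟨by simpa using hiw, hb.reflect_lt hlt⟩

variable [DecidableEq V]

def applyMoves (f : V → ℕ) (l : List (V × ℕ)) : V → ℕ :=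
  l.foldl (fun g p => Function.update g p.1 p.2) f

def moveCount (v : V) (l : List (V × ℕ)) : ℕ := (l.map Prod.fst).count v

@[simp] lemma applyMoves_nil (f : V → ℕ) : applyMoves f [] = f := rfl

@[simp] lemma applyMoves_cons (f : V → ℕ) (p : V × ℕ) (l : List (V × ℕ)) :
    applyMoves f (p :: l) = applyMoves (Function.update f p.1 p.2) l := rfl

lemma applyMoves_append (f : V → ℕ) (l l' : List (V × ℕ)) :
    applyMoves f (l ++ l') = applyMoves (applyMoves f l) l' :=
  List.foldl_append

lemma eq_fst_of_applyMoves_take_succ_ne {f : V → ℕ} {l : List (V × ℕ)} {i : ℕ}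
    (hi : i < l.length) {x : V}
    (hx : applyMoves f (l.take (i + 1)) x ≠ applyMoves f (l.take i) x) : x = l[i].1 := by
  rw [List.take_add_one, List.getElem?_eq_getElem hi, Option.toList_some, applyMoves_append] at hx
  by_contra hne
  exact hx (Function.update_of_ne hne _ _)

@[simp] lemma moveCount_nil (v : V) : moveCount v [] = 0 := rfl

@[simp] lemma moveCount_cons (v : V) (p : V × ℕ) (l : List (V × ℕ)) :
    moveCount v (p :: l) = moveCount v l + if p.1 = v then 1 else 0 := by
  simp only [moveCount, List.map_cons, List.count_cons, beq_iff_eq]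

lemma moveCount_append (v : V) (l l' : List (V × ℕ)) :
    moveCount v (l ++ l') = moveCount v l + moveCount v l' := by
  simp [moveCount]

lemma sum_moveCount [Fintype V] (l : List (V × ℕ)) : ∑ v, moveCount v l = l.length := by
  simpa [moveCount] using
    Multiset.sum_count_eq_card (s := univ) (m := (l.map Prod.fst : Multiset V)) (by simp)

def recolorMoves (g : V → ℕ) (vs : List V) : List (V × ℕ) := vs.map fun v => (v, g v)

lemma applyMoves_recolorMoves (f g : V → ℕ) (vs : List V) :
    applyMoves f (recolorMoves g vs) = fun v => if v ∈ vs then g v else f v := by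
  induction vs generalizing f with
  | nil => simp [recolorMoves]
  | cons a vs ih =>
    ext x
    simp only [recolorMoves, List.map_cons, applyMoves_cons] at ih ⊢
    rw [ih]
    by_cases hx : x = a <;> simp [hx]

lemma moveCount_recolorMoves (v : V) (g : V → ℕ) (vs : List V) :
    moveCount v (recolorMoves g vs) = vs.count v := by
  simp [moveCount, recolorMoves, Function.comp_def]

lemma ProperFrom.update {s : ℕ} {f : V → ℕ} (h : ProperFrom G ℓ s f) {x : V} {c : ℕ}
    (hc : ∀ w, G.Adj x w → s ≤ ℓ w → c ≠ f w) : ProperFrom G ℓ s (Function.update f x c) := by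
  intro u v huv hu hv
  by_cases hux : u = x <;> by_cases hvx : v = x
  · exact absurd (hux ▸ hvx ▸ huv) G.irrefl
  · subst hux
    simpa [hvx] using hc v huv hv
  · subst hvx
    simpa [hux] using (hc u huv.symm hu).symm
  · simpa [hux, hvx] using h u v huv hu hv

variable (G ℓ L) in
def IsRecoloring (s : ℕ) : (V → ℕ) → List (V × ℕ) → Prop
  | _, [] => True
  | f, p :: l => s ≤ ℓ p.1 ∧ p.2 ∈ L p.1 ∧ ProperFrom G ℓ s (Function.update f p.1 p.2) ∧
      IsRecoloring s (Function.update f p.1 p.2) l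

namespace IsRecoloring

variable {s : ℕ} {f : V → ℕ} {l : List (V × ℕ)}

lemma append {l' : List (V × ℕ)} (h : IsRecoloring G ℓ L s f l)
    (h' : IsRecoloring G ℓ L s (applyMoves f l) l') : IsRecoloring G ℓ L s f (l ++ l') := by
  induction l generalizing f with
  | nil => exact h'
  | cons p l ih => exact ⟨h.1, h.2.1, h.2.2.1, ih h.2.2.2 h'⟩

lemma take (h : IsRecoloring G ℓ L s f l) (i : ℕ) : IsRecoloring G ℓ L s f (l.take i) := by
  induction l generalizing f i with
  | nil => simp [IsRecoloring]
  | cons p l ih =>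
    cases i with
    | zero => trivial
    | succ i => exact ⟨h.1, h.2.1, h.2.2.1, ih h.2.2.2 i⟩

lemma properFrom_applyMoves (h : IsRecoloring G ℓ L s f l) (hf : ProperFrom G ℓ s f) :
    ProperFrom G ℓ s (applyMoves f l) := by
  induction l generalizing f with
  | nil => exact hf
  | cons p l ih => exact ih h.2.2.2 h.2.2.1

lemma applyMoves_mem (h : IsRecoloring G ℓ L s f l) (hf : ∀ v, f v ∈ L v) (v : V) :
    applyMoves f l v ∈ L v := by
  induction l generalizing f with
  | nil => exact hf v
  | cons p l ih =>
    refine ih h.2.2.2 fun w => ?_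
    rcases eq_or_ne w p.1 with rfl | hw
    · simpa using h.2.1
    · simpa [hw] using hf w

lemma applyMoves_of_lt (h : IsRecoloring G ℓ L s f l) {v : V} (hv : ℓ v < s) :
    applyMoves f l v = f v := by
  induction l generalizing f with
  | nil => rfl
  | cons p l ih =>
    have hvp : v ≠ p.1 := fun hvp => by have := h.1; rw [← hvp] at this; omega
    rw [applyMoves_cons, ih h.2.2.2, Function.update_of_ne hvp]

lemma congr {g : V → ℕ} (h : IsRecoloring G ℓ L s f l) (hfg : ∀ v, s ≤ ℓ v → f v = g v) :
    IsRecoloring G ℓ L s g l ∧ ∀ v, s ≤ ℓ v → applyMoves f l v = applyMoves g l v := by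
  induction l generalizing f g with
  | nil => exact ⟨trivial, hfg⟩
  | cons p l ih =>
    have hfg' : ∀ v, s ≤ ℓ v →
        Function.update f p.1 p.2 v = Function.update g p.1 p.2 v := by
      intro v hv
      rcases eq_or_ne v p.1 with rfl | hvp
      · simp
      · simpa [hvp] using hfg v hv
    obtain ⟨hrec, happ⟩ := ih h.2.2.2 hfg'
    exact ⟨⟨h.1, h.2.1, h.2.2.1.congr hfg', hrec⟩, happ⟩

lemma exists_seq {σ η : V → ℕ} (hl : IsRecoloring G ℓ L 0 σ l)
    (hσ : ∀ u v, G.Adj u v → σ u ≠ σ v) (hσL : ∀ v, σ v ∈ L v) (hlη : applyMoves σ l = η) :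
    ∃ cs : ℕ → V → ℕ, cs 0 = σ ∧ cs l.length = η ∧
      (∀ i ≤ l.length, (∀ u v, G.Adj u v → cs i u ≠ cs i v) ∧ ∀ v, cs i v ∈ L v) ∧
      ∀ i < l.length, ∀ x y, cs (i + 1) x ≠ cs i x → cs (i + 1) y ≠ cs i y → x = y := by
  refine ⟨fun i => applyMoves σ (l.take i), rfl, by simpa using hlη, fun i _ => ⟨?_, ?_⟩,
    fun i hi x y hx hy => ?_⟩
  · exact properFrom_zero.1 ((hl.take i).properFrom_applyMoves (properFrom_zero.2 hσ))
  · exact (hl.take i).applyMoves_mem hσL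
  · rw [eq_fst_of_applyMoves_take_succ_ne hi hx, eq_fst_of_applyMoves_take_succ_ne hi hy]

end IsRecoloring

lemma isRecoloring_recolorMoves {s : ℕ} {f g : V → ℕ} {vs : List V} (hf : ProperFrom G ℓ s f)
    (hind : ∀ u ∈ vs, ∀ w ∈ vs, ¬ G.Adj u w) (hlev : ∀ v ∈ vs, s ≤ ℓ v)
    (hgL : ∀ v ∈ vs, g v ∈ L v) (hg : ∀ v ∈ vs, ∀ w, G.Adj v w → s ≤ ℓ w → g v ≠ f w) :
    IsRecoloring G ℓ L s f (recolorMoves g vs) := by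
  induction vs generalizing f with
  | nil => trivial
  | cons a vs ih =>
    have hf' : ProperFrom G ℓ s (Function.update f a (g a)) :=
      hf.update (hg a List.mem_cons_self)
    refine ⟨hlev a List.mem_cons_self, hgL a List.mem_cons_self, hf', ih hf' ?_ ?_ ?_ ?_⟩
    · exact fun u hu w hw => hind u (List.mem_cons_of_mem _ hu) w (List.mem_cons_of_mem _ hw)
    · exact fun v hv => hlev v (List.mem_cons_of_mem _ hv)
    · exact fun v hv => hgL v (List.mem_cons_of_mem _ hv)
    · intro v hv w hvw hw
      have hwa : w ≠ a := by
        rintro rfl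
        exact hind w List.mem_cons_self v (List.mem_cons_of_mem _ hv) hvw.symm
      simpa [hwa] using hg v (List.mem_cons_of_mem _ hv) w hvw hw

lemma isRecoloring_recolorMoves_level [Fintype V]
    (hnadj : ∀ u v, ℓ u = ℓ v → ¬ G.Adj u v) {s : ℕ}
    {τ η : V → ℕ} (hτ : ProperFrom G ℓ s τ) (hη : ProperFrom G ℓ s η) (hηL : ∀ v, η v ∈ L v)
    (hτη : ∀ v, ℓ v ≠ s → τ v = η v) :
    IsRecoloring G ℓ L s τ (recolorMoves η ({v | ℓ v = s} : Finset V).toList) ∧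
      applyMoves τ (recolorMoves η ({v | ℓ v = s} : Finset V).toList) = η := by
  have hmem : ∀ v, v ∈ ({v | ℓ v = s} : Finset V).toList ↔ ℓ v = s := by simp
  refine ⟨isRecoloring_recolorMoves hτ ?_ ?_ (fun v _ => hηL v) ?_, ?_⟩
  · exact fun x hx y hy => hnadj x y (((hmem x).1 hx).trans ((hmem y).1 hy).symm)
  · exact fun v hv => ((hmem v).1 hv).ge
  · intro v hv w hvw hw
    rw [hτη w fun hws => hnadj v w (((hmem v).1 hv).trans hws.symm) hvw]
    exact hη v w hvw ((hmem v).1 hv).ge hw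
  · ext v
    rw [applyMoves_recolorMoves]
    by_cases hv : ℓ v = s
    · simp [hv]
    · simp [hv, hτη v hv]

variable [Fintype V] [DecidableRel G.Adj]

lemma exists_isRecoloring_append_move (hnadj : ∀ u v, ℓ u = ℓ v → ¬ G.Adj u v)
    (hdeg : ∀ v, #(forwardNeighborFinset G ℓ v) + 2 ≤ #(L v)) {s : ℕ} {f : V → ℕ}
    (hf : ProperFrom G ℓ s f) {u : V} {c : ℕ} (hu : s + 1 ≤ ℓ u) (hcL : c ∈ L u)
    (hfu : ProperFrom G ℓ (s + 1) (Function.update f u c)) :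
    ∃ m, IsRecoloring G ℓ L s f (m ++ [(u, c)]) ∧
      (∀ v, s + 1 ≤ ℓ v → applyMoves f (m ++ [(u, c)]) v = Function.update f u c v) ∧
      ∀ v, moveCount v m ≤ if ℓ v = s ∧ G.Adj u v then 1 else 0 := by
  set S : Finset V := {v | ℓ v = s ∧ G.Adj u v ∧ f v = c}
  have hmemS : ∀ v, v ∈ S.toList ↔ ℓ v = s ∧ G.Adj u v ∧ f v = c := by simp [S]
  choose d hdL hdc hdf using fun v => exists_mem_ne_and_forall_ne f c
    (A := L v) (F := forwardNeighborFinset G ℓ v) (by have := hdeg v; omega)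
  have hm : IsRecoloring G ℓ L s f (recolorMoves d S.toList) := by
    refine isRecoloring_recolorMoves hf ?_ ?_ (fun v _ => hdL v) ?_
    · intro x hx y hy
      exact hnadj x y (((hmemS x).1 hx).1.trans ((hmemS y).1 hy).1.symm)
    · exact fun v hv => ((hmemS v).1 hv).1.ge
    · intro v hv w hvw hw
      exact hdf v w (mem_forwardNeighborFinset_of_le hnadj hvw (((hmemS v).1 hv).1 ▸ hw))
  have happ : ∀ v, applyMoves f (recolorMoves d S.toList) v =
      if v ∈ S.toList then d v else f v := by
    simp [applyMoves_recolorMoves]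
  have hc : ∀ w, G.Adj u w → s ≤ ℓ w → c ≠ applyMoves f (recolorMoves d S.toList) w := by
    intro w huw hw
    rw [happ]
    split_ifs with hwS
    · exact (hdc w).symm
    rcases hw.eq_or_lt with hws | hws
    · exact fun hcw => hwS ((hmemS w).2 ⟨hws.symm, huw, hcw.symm⟩)
    · simpa [huw.ne'] using hfu u w huw hu hws
  refine ⟨recolorMoves d S.toList,
    hm.append ⟨Nat.le_of_succ_le hu, hcL, (hm.properFrom_applyMoves hf).update hc, trivial⟩,
    fun v hv => ?_, fun v => ?_⟩
  · have hvS : v ∉ S.toList := fun h => by have := ((hmemS v).1 h).1; omega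
    rcases eq_or_ne v u with rfl | hvu
    · simp [applyMoves_append]
    · simp [applyMoves_append, hvu, happ, hvS]
  · rw [moveCount_recolorMoves]
    by_cases hvS : v ∈ S.toList
    · simpa [((hmemS v).1 hvS).1, ((hmemS v).1 hvS).2.1]
        using List.nodup_iff_count_le_one.1 S.nodup_toList v
    · simp [List.count_eq_zero_of_not_mem hvS]

lemma exists_isRecoloring_lift (hnadj : ∀ u v, ℓ u = ℓ v → ¬ G.Adj u v)
    (hdeg : ∀ v, #(forwardNeighborFinset G ℓ v) + 2 ≤ #(L v)) {s : ℕ} (l : List (V × ℕ))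
    {f : V → ℕ} (hl : IsRecoloring G ℓ L (s + 1) f l) (hf : ProperFrom G ℓ s f)
    (hfL : ∀ v, f v ∈ L v) :
    ∃ m, IsRecoloring G ℓ L s f m ∧
      (∀ v, s + 1 ≤ ℓ v → applyMoves f m v = applyMoves f l v) ∧
      (∀ v, ℓ v ≠ s → moveCount v m = moveCount v l) ∧
      (∀ v, ℓ v = s → moveCount v m ≤ ∑ w ∈ forwardNeighborFinset G ℓ v, moveCount w l) := by
  induction l generalizing f with
  | nil => exact ⟨[], trivial, fun _ _ => rfl, fun _ _ => rfl, fun _ _ => by simp [moveCount]⟩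
  | cons p l ih =>
    obtain ⟨u, c⟩ := p
    obtain ⟨hu, hcL, hfu, hl⟩ := hl
    dsimp only at hu hcL hfu hl
    obtain ⟨m₁, hm₁, happ₁, hcnt₁⟩ :=
      exists_isRecoloring_append_move hnadj hdeg hf hu hcL hfu
    obtain ⟨hl₂, happ₂⟩ := hl.congr fun v hv => (happ₁ v hv).symm
    obtain ⟨m, hm, happ, hcnt, hcnt_s⟩ :=
      ih hl₂ (hm₁.properFrom_applyMoves hf) (hm₁.applyMoves_mem hfL)
    refine ⟨m₁ ++ [(u, c)] ++ m, hm₁.append hm, fun v hv => ?_, fun v hv => ?_, fun v hv => ?_⟩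
    · rw [applyMoves_append, happ v hv, ← happ₂ v hv, applyMoves_cons]
    · have h₁ : moveCount v m₁ = 0 := by simpa [hv] using hcnt₁ v
      simp only [moveCount_append, moveCount_cons, moveCount_nil, h₁, hcnt v hv]
      omega
    · have huv : u ≠ v := by rintro rfl; omega
      have h₁ : moveCount v m₁ ≤ if u ∈ forwardNeighborFinset G ℓ v then 1 else 0 := by
        by_cases hadj : G.Adj u v
        · have hfwd : u ∈ forwardNeighborFinset G ℓ v :=
            mem_forwardNeighborFinset.2 ⟨hadj.symm, by omega⟩
          simpa [hv, hadj, hfwd] using hcnt₁ v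
        · have : moveCount v m₁ = 0 := by simpa [hadj] using hcnt₁ v
          omega
      have := hcnt_s v hv
      simp only [moveCount_append, moveCount_cons, moveCount_nil, huv, if_false,
        sum_add_distrib, sum_ite_eq]
      omega

lemma sum_moveCount_forwardNeighborFinset_add_one_le
    (hdeg : ∀ v, #(forwardNeighborFinset G ℓ v) + 2 ≤ #(L v)) {t k : ℕ} (hk : ∀ v, #(L v) ≤ k)
    {l : List (V × ℕ)} (hl : ∀ w, moveCount w l ≤ k ^ (t - ℓ w)) {v : V} (hv : ℓ v < t) :
    ∑ w ∈ forwardNeighborFinset G ℓ v, moveCount w l + 1 ≤ k ^ (t - ℓ v) := by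
  have hk₂ : #(forwardNeighborFinset G ℓ v) + 2 ≤ k := (hdeg v).trans (hk v)
  have hsum : ∑ w ∈ forwardNeighborFinset G ℓ v, moveCount w l ≤
      #(forwardNeighborFinset G ℓ v) * k ^ (t - ℓ v - 1) := by
    rw [← smul_eq_mul]
    refine sum_le_card_nsmul _ _ _ fun w hw => (hl w).trans (Nat.pow_le_pow_right (by omega) ?_)
    have := (mem_forwardNeighborFinset.1 hw).2
    omega
  calc ∑ w ∈ forwardNeighborFinset G ℓ v, moveCount w l + 1
      ≤ #(forwardNeighborFinset G ℓ v) * k ^ (t - ℓ v - 1) + 1 := by omega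
    _ ≤ k ^ (t - ℓ v - 1 + 1) := mul_pow_add_one_le_pow_succ hk₂ _
    _ = k ^ (t - ℓ v) := by rw [Nat.sub_add_cancel (by omega)]

theorem exists_isRecoloring (hnadj : ∀ u v, ℓ u = ℓ v → ¬ G.Adj u v)
    (hdeg : ∀ v, #(forwardNeighborFinset G ℓ v) + 2 ≤ #(L v)) {t k : ℕ} (ht : ∀ v, ℓ v < t)
    (hk : ∀ v, #(L v) ≤ k) {s : ℕ} (hs : s ≤ t) {σ η : V → ℕ}
    (hσ : ProperFrom G ℓ s σ) (hσL : ∀ v, σ v ∈ L v) (hη : ProperFrom G ℓ s η)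
    (hηL : ∀ v, η v ∈ L v) (hlow : ∀ v, ℓ v < s → σ v = η v) :
    ∃ l, IsRecoloring G ℓ L s σ l ∧ applyMoves σ l = η ∧
      ∀ v, moveCount v l ≤ k ^ (t - ℓ v) := by
  induction hs using Nat.decreasingInduction generalizing σ η with
  | self => exact ⟨[], trivial, funext fun v => hlow v (ht v), fun _ => by simp⟩
  | of_succ s hst ih =>
    set η₁ : V → ℕ := fun v => if ℓ v ≤ s then σ v else η v with hη₁
    obtain ⟨l, hl, hlη, hlcnt⟩ := ih (η := η₁) (hσ.mono s.le_succ) hσL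
      ((hη.mono s.le_succ).congr fun v hv => by simp [hη₁]; omega)
      (fun v => by by_cases hv : ℓ v ≤ s <;> simp [hη₁, hv, hσL v, hηL v])
      (fun v hv => by simp [hη₁]; omega)
    obtain ⟨m, hm, hmapp, hmcnt, hmcnt_s⟩ := exists_isRecoloring_lift hnadj hdeg l hl hσ hσL
    have hmη : ∀ v, ℓ v ≠ s → applyMoves σ m v = η v := by
      intro v hv
      rcases lt_or_gt_of_ne hv with hv | hv
      · rw [hm.applyMoves_of_lt hv, hlow v hv]
      · rw [hmapp v hv, hlη]
        simp [hη₁]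
        omega
    obtain ⟨hm₂, hm₂η⟩ :=
      isRecoloring_recolorMoves_level hnadj (hm.properFrom_applyMoves hσ) hη hηL hmη
    refine ⟨_, hm.append hm₂, by rw [applyMoves_append, hm₂η], fun v => ?_⟩
    rw [moveCount_append, moveCount_recolorMoves]
    by_cases hv : ℓ v = s
    · have := hmcnt_s v hv
      have : List.count v ({v | ℓ v = s} : Finset V).toList ≤ 1 :=
        List.nodup_iff_count_le_one.1 (nodup_toList _) v
      have := sum_moveCount_forwardNeighborFinset_add_one_le hdeg hk hlcnt (ht v)
      omega
    · rw [List.count_eq_zero_of_not_mem (by simpa using hv), hmcnt v hv]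
      exact hlcnt v

end ListRecoloring

open ListRecoloring Finset in
theorem stmt9_general {V : Type*} [Fintype V] (G : SimpleGraph V)
    (t : ℕ)
    (e : Fin (Fintype.card V) ≃ V) (b : Fin (Fintype.card V) → ℕ)
    (hbmono : Monotone b) (hbt : ∀ i, b i < t)
    (hbind : ∀ i j, b i = b j → ¬ G.Adj (e i) (e j))
    (L : V → Finset ℕ)
    (hL : ∀ i : Fin (Fintype.card V),
      Set.ncard {j : Fin (Fintype.card V) | G.Adj (e i) (e j) ∧ i < j} + 2 ≤ (L (e i)).card)
    (σ η : V → ℕ)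
    (hσ : (∀ u v : V, G.Adj u v → σ u ≠ σ v) ∧ ∀ v : V, σ v ∈ L v)
    (hη : (∀ u v : V, G.Adj u v → η u ≠ η v) ∧ ∀ v : V, η v ∈ L v) :
    ∃ (len : ℕ) (cs : ℕ → V → ℕ),
      len ≤ Fintype.card V * (Finset.univ.biUnion L).card ^ (t + 1) ∧
      cs 0 = σ ∧ cs len = η ∧
      (∀ i : ℕ, i ≤ len →
        (∀ u v : V, G.Adj u v → cs i u ≠ cs i v) ∧ ∀ v : V, cs i v ∈ L v) ∧
      (∀ i : ℕ, i < len → ∀ x y : V,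
        cs (i + 1) x ≠ cs i x → cs (i + 1) y ≠ cs i y → x = y) := by
  classical
  set ℓ : V → ℕ := fun v => b (e.symm v)
  have hnadj : ∀ u v, ℓ u = ℓ v → ¬ G.Adj u v := fun u v h => by simpa using hbind _ _ h
  have hdeg : ∀ v, #(forwardNeighborFinset G ℓ v) + 2 ≤ #(L v) := fun v => by
    have h₁ := card_forwardNeighborFinset_le_ncard (G := G) e hbmono (e.symm v)
    have h₂ := hL (e.symm v)
    rw [e.apply_symm_apply] at h₁ h₂
    exact (Nat.add_le_add_right h₁ 2).trans h₂
  have hk : ∀ v, #(L v) ≤ #(univ.biUnion L) := fun v =>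
    card_le_card (subset_biUnion_of_mem L (mem_univ v))
  obtain ⟨l, hl, hlη, hcnt⟩ := exists_isRecoloring hnadj hdeg (fun v => hbt _) hk t.zero_le
    (properFrom_zero.2 hσ.1) hσ.2 (properFrom_zero.2 hη.1) hη.2 (by simp)
  obtain ⟨cs, hcs⟩ := hl.exists_seq hσ.1 hσ.2 hlη
  refine ⟨l.length, cs, ?_, hcs⟩
  calc l.length = ∑ v, moveCount v l := (sum_moveCount l).symm
    _ ≤ ∑ _v : V, #(univ.biUnion L) ^ (t + 1) := sum_le_sum fun v _ =>
      (hcnt v).trans (Nat.pow_le_pow_right (by linarith [hdeg v, hk v]) (by omega))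
    _ = Fintype.card V * #(univ.biUnion L) ^ (t + 1) := by simp

theorem stmt9 {V : Type*} [Fintype V] [DecidableEq V] (G : SimpleGraph V)
    [DecidableRel G.Adj] (t : ℕ)
    (e : Fin (Fintype.card V) ≃ V) (b : Fin (Fintype.card V) → ℕ)
    (hbmono : Monotone b) (hbt : ∀ i, b i < t)
    (hbind : ∀ i j, b i = b j → ¬ G.Adj (e i) (e j))
    (L : V → Finset ℕ)
    (hL : ∀ i : Fin (Fintype.card V),
      Set.ncard {j : Fin (Fintype.card V) | G.Adj (e i) (e j) ∧ i < j} + 2 ≤ (L (e i)).card)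
    (σ η : V → ℕ)
    (hσ : (∀ u v : V, G.Adj u v → σ u ≠ σ v) ∧ ∀ v : V, σ v ∈ L v)
    (hη : (∀ u v : V, G.Adj u v → η u ≠ η v) ∧ ∀ v : V, η v ∈ L v) :
    ∃ (len : ℕ) (cs : ℕ → V → ℕ),
      len ≤ Fintype.card V * (Finset.univ.biUnion L).card ^ (t + 1) ∧
      cs 0 = σ ∧ cs len = η ∧
      (∀ i : ℕ, i ≤ len →
        (∀ u v : V, G.Adj u v → cs i u ≠ cs i v) ∧ ∀ v : V, cs i v ∈ L v) ∧
      (∀ i : ℕ, i < len → ∀ x y : V,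
        cs (i + 1) x ≠ cs i x → cs (i + 1) y ≠ cs i y → x = y) :=
  stmt9_general G t e b hbmono hbt hbind L hL σ η hσ hη
end

section
/- Let G be a graph of maximum degree Δ ≥ 3 in which every vertex v_i along a path v_1,...,v_6 (with v_i at distance exactly i from a set B) has degree Δ and the set N(v_i) \ {v_{i−1}} is a clique for i = 3,4,5. Then a contradiction follows; equivalently, for some i ∈ {3,4,5}, either deg(v_i) < Δ or N(v_i) \ {v_{i−1}} contains two non-adjacent vertices. -/
open SimpleGraph in
lemma adj_dist_le' {V : Type*} (G : SimpleGraph V) {x y b : V} (h : G.Adj y x)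
    (hr : G.Reachable x b) : G.dist y b ≤ G.dist x b + 1 := by
  obtain ⟨p, hp⟩ := hr.exists_walk_length_eq_dist
  calc G.dist y b ≤ (SimpleGraph.Walk.cons h p).length := SimpleGraph.dist_le _
    _ = G.dist x b + 1 := by simp [hp]

theorem stmt13 {V : Type*} [Fintype V] [DecidableEq V] (G : SimpleGraph V)
    [DecidableRel G.Adj] (Δ : ℕ) (hΔ : G.maxDegree = Δ) (hΔ3 : 3 ≤ Δ)
    (B : Set V) (hB : B.Nonempty)
    (v : ℕ → V)
    (hpath : ∀ i : ℕ, 1 ≤ i → i ≤ 5 → G.Adj (v i) (v (i + 1)))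
    (hdist : ∀ i : ℕ, 1 ≤ i → i ≤ 6 →
      (∃ b ∈ B, G.dist (v i) b = i) ∧ (∀ b ∈ B, i ≤ G.dist (v i) b)) :
    ∃ i : ℕ, 3 ≤ i ∧ i ≤ 5 ∧
      (G.degree (v i) < Δ ∨
        ∃ a b : V, G.Adj (v i) a ∧ G.Adj (v i) b ∧
          a ≠ v (i - 1) ∧ b ≠ v (i - 1) ∧ a ≠ b ∧ ¬ G.Adj a b) := by
  by_contra hcon
  push_neg at hcon
  -- adjacencies
  have a34 : G.Adj (v 3) (v 4) := hpath 3 (by norm_num) (by norm_num)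
  have a45 : G.Adj (v 4) (v 5) := hpath 4 (by norm_num) (by norm_num)
  have a56 : G.Adj (v 5) (v 6) := hpath 5 (by norm_num) (by norm_num)
  -- distance facts
  obtain ⟨b2, hb2B, hb2⟩ := (hdist 2 (by norm_num) (by norm_num)).1
  obtain ⟨b3, hb3B, hb3⟩ := (hdist 3 (by norm_num) (by norm_num)).1
  have h4 : ∀ b ∈ B, 4 ≤ G.dist (v 4) b := (hdist 4 (by norm_num) (by norm_num)).2
  have h5 : ∀ b ∈ B, 5 ≤ G.dist (v 5) b := (hdist 5 (by norm_num) (by norm_num)).2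
  have h6 : ∀ b ∈ B, 6 ≤ G.dist (v 6) b := (hdist 6 (by norm_num) (by norm_num)).2
  have hr3 : G.Reachable (v 3) b3 :=
    SimpleGraph.Reachable.of_dist_ne_zero (by omega)
  -- distinctness of path vertices
  have ne42 : v 4 ≠ v 2 := by
    intro h; have := h4 b2 hb2B; rw [h, hb2] at this; omega
  have ne53 : v 5 ≠ v 3 := by
    intro h; have := h5 b3 hb3B; rw [h, hb3] at this; omega
  have ne64 : v 6 ≠ v 4 := by
    intro h
    have := h6 b3 hb3B
    rw [h] at this
    have h4le : G.dist (v 4) b3 ≤ 4 := by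
      have := adj_dist_le' G a34.symm hr3; omega
    omega
  -- cliques
  have Q3 := (hcon 3 (by norm_num) (by norm_num)).2
  have Q4 := (hcon 4 (by norm_num) (by norm_num)).2
  have Q5 := (hcon 5 (by norm_num) (by norm_num)).2
  -- degree of v 3 equals Δ ≥ 3, so there is w ∈ N(v3) \ {v2, v4}
  have hdeg3 : G.degree (v 3) = Δ := by
    have h1 := (hcon 3 (by norm_num) (by norm_num)).1
    have h2 := G.degree_le_maxDegree (v 3)
    omega
  obtain ⟨w, hw, hwne⟩ : ∃ w ∈ G.neighborFinset (v 3), w ∉ ({v 2, v 4} : Finset V) := by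
    by_contra hc
    push_neg at hc
    have hsub : G.neighborFinset (v 3) ⊆ {v 2, v 4} := hc
    have hle := Finset.card_le_card hsub
    have hcard2 : ({v 2, v 4} : Finset V).card ≤ 2 :=
      (Finset.card_insert_le _ _).trans (by simp)
    rw [G.card_neighborFinset_eq_degree, hdeg3] at hle
    omega
  simp only [Finset.mem_insert, Finset.mem_singleton, not_or] at hwne
  obtain ⟨hw2, hw4⟩ := hwne
  rw [SimpleGraph.mem_neighborFinset] at hw
  -- w is close to B
  have hwb3 : G.dist w b3 ≤ 4 := by
    have := adj_dist_le' G hw.symm hr3; omega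
  have hrw : G.Reachable w b3 := hw.symm.reachable.trans hr3
  have hw5 : w ≠ v 5 := by
    intro h; have := h5 b3 hb3B; rw [← h] at this; omega
  have hw6 : w ≠ v 6 := by
    intro h; have := h6 b3 hb3B; rw [← h] at this; omega
  -- clique steps
  have aw4 : G.Adj w (v 4) := Q3 w (v 4) hw a34 hw2 ne42 hw4
  have aw5 : G.Adj w (v 5) := Q4 w (v 5) aw4.symm a45 (fun h => G.irrefl (h ▸ hw)) ne53 hw5
  have aw6 : G.Adj w (v 6) := Q5 w (v 6) aw5.symm a56 hw4 ne64 hw6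
  -- final contradiction: dist (v 6) b3 ≤ 5 < 6
  have : G.dist (v 6) b3 ≤ 5 := by
    have := adj_dist_le' G aw6.symm hrw; omega
  have := h6 b3 hb3B
  omega
end

section
/- Let P = v_0, ..., v_r be a shortest path in a graph G of maximum degree Δ ≥ 3 with a proper (Δ+1)-coloring σ, in which v_2,...,v_r are all frozen. Suppose there is an index 2 ≤ i ≤ r−3 with σ(v_i) ≠ σ(v_{i+3}), and let i be minimal with this property. After recoloring the ladder along P (starting from the first non-frozen vertex among v_0, v_1), the vertex v_{i+2} is non-frozen in the resulting coloring η, specifically the color σ(v_{i+3}) is absent from the closed neighborhood of v_{i+2} in η. -/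
theorem stmt14 {V : Type*} [Fintype V] [DecidableEq V] (G : SimpleGraph V)
    [DecidableRel G.Adj] (Δ r : ℕ) (hΔ : G.maxDegree = Δ) (hΔ3 : 3 ≤ Δ)
    (v : ℕ → V)
    (hadj : ∀ j : ℕ, j + 1 ≤ r → G.Adj (v j) (v (j + 1)))
    (hshort : ∀ i j : ℕ, i ≤ j → j ≤ r → G.dist (v i) (v j) = j - i)
    (σ : V → Fin (Δ + 1)) (hσ : ∀ a b : V, G.Adj a b → σ a ≠ σ b)
    (hfr : ∀ j : ℕ, 2 ≤ j → j ≤ r →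
      ∀ col : Fin (Δ + 1), ∃ w : V, (w = v j ∨ G.Adj (v j) w) ∧ σ w = col)
    (h0 : ¬ (∀ col : Fin (Δ + 1), ∃ w : V, (w = v 0 ∨ G.Adj (v 0) w) ∧ σ w = col))
    (i : ℕ) (hi2 : 2 ≤ i) (hi3 : i + 3 ≤ r) (hir : i ≤ r - 3)
    (hdiff : σ (v i) ≠ σ (v (i + 3)))
    (hmin : ∀ i' : ℕ, 2 ≤ i' → i' < i → σ (v i') = σ (v (i' + 3)))
    (s : ℕ)
    (hs0 : (∀ col : Fin (Δ + 1), ∃ w : V, (w = v 1 ∨ G.Adj (v 1) w) ∧ σ w = col) → s = 0)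
    (hs1 : ¬ (∀ col : Fin (Δ + 1), ∃ w : V, (w = v 1 ∨ G.Adj (v 1) w) ∧ σ w = col) → s = 1)
    (η : V → Fin (Δ + 1)) (hη : ∀ a b : V, G.Adj a b → η a ≠ η b)
    (hlad : ∀ j : ℕ, s ≤ j → j + 1 ≤ r → η (v (j + 1)) = σ (v j))
    (hoff : ∀ x : V, (∀ j : ℕ, s ≤ j → j ≤ r → x ≠ v j) → η x = σ x) :
    ∀ w : V, (w = v (i + 2) ∨ G.Adj (v (i + 2)) w) → η w ≠ σ (v (i + 3)) := by
  have hs : s ≤ 1 := by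
    by_cases h1 : (∀ col : Fin (Δ + 1), ∃ w : V, (w = v 1 ∨ G.Adj (v 1) w) ∧ σ w = col)
    · simp [hs0 h1]
    · simp [hs1 h1]
  have hadj12 : G.Adj (v (i+1)) (v (i+2)) := hadj (i+1) (by omega)
  have hadj23 : G.Adj (v (i+2)) (v (i+3)) := hadj (i+2) (by omega)
  set N : Finset V := insert (v (i+2)) (G.neighborFinset (v (i+2))) with hN
  have hmemN : ∀ x : V, x ∈ N ↔ (x = v (i+2) ∨ G.Adj (v (i+2)) x) := by
    intro x
    simp [hN, SimpleGraph.mem_neighborFinset]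
  have himg : N.image σ = Finset.univ := by
    apply Finset.eq_univ_of_forall
    intro col
    obtain ⟨x, hx1, hx2⟩ := hfr (i+2) (by omega) (by omega) col
    exact Finset.mem_image.mpr ⟨x, (hmemN x).mpr hx1, hx2⟩
  have hcardN : N.card ≤ Δ + 1 := by
    calc N.card ≤ (G.neighborFinset (v (i+2))).card + 1 := Finset.card_insert_le _ _
    _ = G.degree (v (i+2)) + 1 := by rw [SimpleGraph.card_neighborFinset_eq_degree]
    _ ≤ Δ + 1 := by
        have := G.degree_le_maxDegree (v (i+2))
        omega
  have hinj : Set.InjOn σ N := by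
    apply Finset.card_image_iff.mp
    have h1 : (N.image σ).card = Δ + 1 := by rw [himg]; simp
    have h2 : (N.image σ).card ≤ N.card := Finset.card_image_le
    omega
  have hne13 : v (i+1) ≠ v (i+3) := by
    intro h
    have hd := hshort (i+1) (i+3) (by omega) hi3
    rw [h, SimpleGraph.dist_self] at hd
    omega
  intro w hw heq
  by_cases hoffw : ∀ j : ℕ, s ≤ j → j ≤ r → w ≠ v j
  · have hηw : η w = σ w := hoff w hoffw
    have hwN : w ∈ N := (hmemN w).mpr hw
    have h3N : v (i+3) ∈ N := (hmemN _).mpr (Or.inr hadj23)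
    have hw3 : w = v (i+3) := hinj hwN h3N (by rw [← hηw, heq])
    exact hoffw (i+3) (by omega) hi3 hw3
  · push_neg at hoffw
    obtain ⟨j, hj1, hj2, hj3⟩ := hoffw
    rcases hw with hw | hw
    · have hη2 : η w = σ (v (i+1)) := by rw [hw]; exact hlad (i+1) (by omega) (by omega)
      rw [hη2] at heq
      exact hne13 (hinj ((hmemN _).mpr (Or.inr hadj12.symm)) ((hmemN _).mpr (Or.inr hadj23)) heq)
    · rw [hj3] at hw heq
      have hd1 : G.dist (v (i+2)) (v j) = 1 := SimpleGraph.dist_eq_one_iff_adj.mpr hw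
      have hj' : j = i + 1 ∨ j = i + 3 := by
        rcases le_or_gt j (i+2) with h | h
        · have := hshort j (i+2) h (by omega)
          rw [SimpleGraph.dist_comm] at this
          omega
        · have := hshort (i+2) j (by omega) hj2
          omega
      rcases hj' with rfl | rfl
      · have : η (v (i+1)) = σ (v i) := hlad i (by omega) (by omega)
        rw [this] at heq
        exact hdiff heq
      · have : η (v (i+3)) = σ (v (i+2)) := hlad (i+2) (by omega) (by omega)
        rw [this] at heq
        exact hσ _ _ hadj23 heq
end

section
/- Let G be a graph of maximum degree Δ ≥ 3 with a proper (Δ+1)-coloring σ, and let P = v_0,...,v_r (r ≥ 5) be a shortest path such that v_2,...,v_r are frozen and σ(v_i) = i mod 3 for all i ≥ 2. If a vertex z outside P has a unique neighbor v_5 on P and z is frozen in σ, then z is non-frozen in the coloring η obtained by recoloring the ladder along P (in which η(v_5) ≠ σ(v_5)). -/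
theorem stmt15 {V : Type*} [Fintype V] [DecidableEq V] (G : SimpleGraph V)
    [DecidableRel G.Adj] (Δ r : ℕ) (hΔ : G.maxDegree = Δ) (hΔ3 : 3 ≤ Δ) (hr : 5 ≤ r)
    (v : ℕ → V)
    (hadj : ∀ j : ℕ, j + 1 ≤ r → G.Adj (v j) (v (j + 1)))
    (hshort : ∀ i j : ℕ, i ≤ j → j ≤ r → G.dist (v i) (v j) = j - i)
    (σ : V → Fin (Δ + 1)) (hσ : ∀ a b : V, G.Adj a b → σ a ≠ σ b)
    (hfr : ∀ j : ℕ, 2 ≤ j → j ≤ r →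
      ∀ col : Fin (Δ + 1), ∃ w : V, (w = v j ∨ G.Adj (v j) w) ∧ σ w = col)
    (hper : ∀ j : ℕ, 2 ≤ j → j ≤ r → (σ (v j)).val = j % 3)
    (z : V) (hzP : ∀ j : ℕ, j ≤ r → z ≠ v j)
    (hz5 : G.Adj z (v 5))
    (hzuniq : ∀ j : ℕ, j ≤ r → G.Adj z (v j) → j = 5)
    (hzfr : ∀ col : Fin (Δ + 1), ∃ w : V, (w = z ∨ G.Adj z w) ∧ σ w = col)
    (η : V → Fin (Δ + 1)) (hη : ∀ a b : V, G.Adj a b → η a ≠ η b)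
    (hlad : ∀ j : ℕ, j + 1 ≤ r → η (v (j + 1)) = σ (v j))
    (h5 : η (v 5) ≠ σ (v 5))
    (hoff : ∀ x : V, (∀ j : ℕ, j ≤ r → x ≠ v j) → η x = σ x) :
    ¬ (∀ col : Fin (Δ + 1), ∃ w : V, (w = z ∨ G.Adj z w) ∧ η w = col) := by
  classical
  -- closed neighborhood of z
  set S : Finset V := insert z (G.neighborFinset z) with hS
  have hmemS : ∀ w : V, (w = z ∨ G.Adj z w) → w ∈ S := by
    intro w hw
    rcases hw with h | h
    · subst h; exact Finset.mem_insert_self _ _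
    · exact Finset.mem_insert_of_mem (by simpa using h)
  have hcardS : S.card ≤ Δ + 1 := by
    have h1 : S.card ≤ (G.neighborFinset z).card + 1 := Finset.card_insert_le _ _
    have h2 : (G.neighborFinset z).card = G.degree z := G.card_neighborFinset_eq_degree z
    have h3 : G.degree z ≤ Δ := hΔ ▸ G.degree_le_maxDegree z
    omega
  have himg : S.image σ = Finset.univ := by
    apply Finset.eq_univ_of_forall
    intro col
    obtain ⟨w, hw, hcol⟩ := hzfr col
    exact Finset.mem_image.mpr ⟨w, hmemS w hw, hcol⟩
  have hinj : Set.InjOn σ S := by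
    apply Finset.injOn_of_card_image_eq
    have : (S.image σ).card = Δ + 1 := by rw [himg]; simp
    have hle : S.card ≤ (S.image σ).card := by omega
    exact le_antisymm (Finset.card_image_le) hle
  intro hfroz
  obtain ⟨w, hw, hcol⟩ := hfroz (σ (v 5))
  rcases hw with hwz | hwadj
  · subst hwz
    have hηz : η w = σ w := hoff w (hzP)
    exact hσ w (v 5) hz5 (hηz ▸ hcol)
  · by_cases hwP : ∃ j ≤ r, w = v j
    · obtain ⟨j, hjr, hwj⟩ := hwP
      have hj5 : j = 5 := hzuniq j hjr (hwj ▸ hwadj)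
      subst hj5
      exact h5 (hwj ▸ hcol)
    · push_neg at hwP
      have hηw : η w = σ w := hoff w (fun j hj => hwP j hj)
      have hwS : w ∈ S := hmemS w (Or.inr hwadj)
      have hv5S : v 5 ∈ S := hmemS (v 5) (Or.inr hz5)
      have : w = v 5 := hinj hwS hv5S (hηw ▸ hcol)
      exact hwP 5 hr this
end

section
/- Let G be a connected graph, d ≥ 15, and I a maximal independent set at distance d (i.e., any two vertices of I are at distance > d, and every vertex of G is within distance d of I), so that the balls B(i,7), i ∈ I, are pairwise disjoint. Define the auxiliary graph H on vertex set I where i and i' are adjacent if some path of length at most 2d connects B(i,7) to B(i',7) avoiding all balls B(i'',7) for i'' ∈ I \ {i,i'}. Then H is connected. -/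
private lemma chainDist {V : Type*} (G : SimpleGraph V) (hconn : G.Connected)
    (q : ℕ → V) (ℓ : ℕ) (hq : ∀ j : ℕ, j + 1 ≤ ℓ → G.Adj (q j) (q (j+1))) :
    ∀ i j : ℕ, i ≤ j → j ≤ ℓ → G.dist (q i) (q j) ≤ j - i := by
  intro i j
  induction j with
  | zero => intro hij _; interval_cases i; simp
  | succ j ih =>
    intro hij hjl
    rcases Nat.eq_or_lt_of_le hij with h | h
    · subst h; simp
    · have hij' : i ≤ j := Nat.lt_succ_iff.mp h
      have h1 : G.dist (q j) (q (j+1)) ≤ 1 := by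
        have := SimpleGraph.dist_le (hq j hjl).toWalk
        simpa using this
      calc G.dist (q i) (q (j+1)) ≤ G.dist (q i) (q j) + G.dist (q j) (q (j+1)) :=
            hconn.dist_triangle
        _ ≤ (j - i) + 1 := Nat.add_le_add (ih hij' (by omega)) h1
        _ ≤ (j+1) - i := by omega

theorem stmt18 {V : Type*} [Fintype V] [DecidableEq V] (G : SimpleGraph V)
    [DecidableRel G.Adj] (d : ℕ) (hd : 15 ≤ d)
    (hconn : G.Connected)
    (I : Set V)
    (hIdist : ∀ u ∈ I, ∀ v ∈ I, u ≠ v → d < G.dist u v)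
    (hImax : ∀ v : V, ∃ u ∈ I, G.dist v u ≤ d) :
    (SimpleGraph.fromRel (fun a b : ↥I =>
      ∃ (ℓ : ℕ) (p : ℕ → V), ℓ ≤ 2 * d ∧
        (∀ j : ℕ, j + 1 ≤ ℓ → G.Adj (p j) (p (j + 1))) ∧
        G.dist (a : V) (p 0) ≤ 7 ∧ G.dist (b : V) (p ℓ) ≤ 7 ∧
        (∀ j : ℕ, j ≤ ℓ → ∀ c ∈ I, c ≠ (a : V) → c ≠ (b : V) →
          7 < G.dist c (p j)))).Connected := by
  set H := SimpleGraph.fromRel (fun a b : ↥I =>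
      ∃ (ℓ : ℕ) (p : ℕ → V), ℓ ≤ 2 * d ∧
        (∀ j : ℕ, j + 1 ≤ ℓ → G.Adj (p j) (p (j + 1))) ∧
        G.dist (a : V) (p 0) ≤ 7 ∧ G.dist (b : V) (p ℓ) ≤ 7 ∧
        (∀ j : ℕ, j ≤ ℓ → ∀ c ∈ I, c ≠ (a : V) → c ≠ (b : V) →
          7 < G.dist c (p j))) with hHdef
  have key : ∀ n : ℕ, ∀ a : V, ∀ ha : a ∈ I, ∀ b : V, ∀ hb : b ∈ I,
      G.dist a b ≤ n → H.Reachable ⟨a, ha⟩ ⟨b, hb⟩ := by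
    intro n
    induction n using Nat.strong_induction_on with
    | _ n IH =>
    intro a ha b hb hab
    by_cases hne : a = b
    · subst hne; rfl
    · have hℓd : d < G.dist a b := hIdist a ha b hb hne
      set ℓ := G.dist a b with hℓdef
      obtain ⟨w, hw⟩ := hconn.exists_walk_length_eq_dist a b
      set q := w.getVert with hqdef
      have hq : ∀ j : ℕ, j + 1 ≤ ℓ → G.Adj (q j) (q (j+1)) :=
        fun j hj => w.adj_getVert_succ (by omega)
      have hq0 : q 0 = a := w.getVert_zero
      have hqℓ : q ℓ = b := by rw [hℓdef, ← hw]; exact w.getVert_length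
      have hda : ∀ j : ℕ, j ≤ ℓ → G.dist a (q j) ≤ j := by
        intro j hj
        have := chainDist G hconn q ℓ hq 0 j (Nat.zero_le _) hj
        rw [hq0] at this; simpa using this
      have hdb : ∀ j : ℕ, j ≤ ℓ → G.dist (q j) b ≤ ℓ - j := by
        intro j hj
        have := chainDist G hconn q ℓ hq j ℓ hj le_rfl
        rwa [hqℓ] at this
      by_cases hbig : 2 * d + 2 ≤ ℓ
      · -- long distance: find intermediate point of I
        obtain ⟨c, hc, hcm⟩ := hImax (q (d+1))
        have hmb : G.dist (q (d+1)) b ≤ ℓ - (d+1) := hdb (d+1) (by omega)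
        have ham : G.dist a b ≤ G.dist a (q (d+1)) + G.dist (q (d+1)) b :=
          hconn.dist_triangle
        have hca : c ≠ a := by
          intro h; subst h
          have : G.dist (q (d+1)) c = G.dist c (q (d+1)) := SimpleGraph.dist_comm
          omega
        have hdac : G.dist a c ≤ 2 * d + 1 := by
          have h1 : G.dist a c ≤ G.dist a (q (d+1)) + G.dist (q (d+1)) c :=
            hconn.dist_triangle
          have h2 : G.dist a (q (d+1)) ≤ d + 1 := hda (d+1) (by omega)
          omega
        have hdcb : G.dist c b ≤ ℓ - 1 := by
          have h1 : G.dist c b ≤ G.dist c (q (d+1)) + G.dist (q (d+1)) b :=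
            hconn.dist_triangle
          have h2 : G.dist c (q (d+1)) = G.dist (q (d+1)) c := SimpleGraph.dist_comm
          omega
        exact (IH (ℓ - 1) (by omega) a ha c hc (by omega)).trans
          (IH (ℓ - 1) (by omega) c hc b hb hdcb)
      · -- short distance
        by_cases hhit : ∃ j : ℕ, j ≤ ℓ ∧ ∃ c ∈ I, c ≠ a ∧ c ≠ b ∧ G.dist c (q j) ≤ 7
        · obtain ⟨j, hj, c, hc, hca, hcb, h7⟩ := hhit
          have hqjc : G.dist (q j) c ≤ 7 := by
            rw [SimpleGraph.dist_comm]; exact h7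
          have hac : G.dist a c ≤ j + 7 := by
            have h1 : G.dist a c ≤ G.dist a (q j) + G.dist (q j) c := hconn.dist_triangle
            have h2 := hda j hj
            omega
          have hcb' : G.dist c b ≤ 7 + (ℓ - j) := by
            have h1 : G.dist c b ≤ G.dist c (q j) + G.dist (q j) b := hconn.dist_triangle
            have h2 := hdb j hj
            omega
          have hd1 : d < G.dist a c := hIdist a ha c hc (Ne.symm hca)
          have hd2 : d < G.dist c b := hIdist c hc b hb hcb
          exact (IH (ℓ - 2) (by omega) a ha c hc (by omega)).trans
            (IH (ℓ - 2) (by omega) c hc b hb (by omega))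
        · push_neg at hhit
          refine SimpleGraph.Adj.reachable ?_
          rw [hHdef, SimpleGraph.fromRel_adj]
          refine ⟨by simp [Subtype.ext_iff, hne], Or.inl ⟨ℓ - 2, fun j => q (j+1), by omega,
            fun j hj => hq (j+1) (by omega), ?_, ?_, ?_⟩⟩
          · have := hda 1 (by omega)
            simpa using (by omega : G.dist a (q 1) ≤ 7)
          · show G.dist b (q (ℓ - 2 + 1)) ≤ 7
            have heq : ℓ - 2 + 1 = ℓ - 1 := by omega
            rw [heq]
            have h1 := hdb (ℓ - 1) (by omega)
            have h2 : G.dist b (q (ℓ-1)) = G.dist (q (ℓ-1)) b := SimpleGraph.dist_comm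
            omega
          · intro j hjl c hc hca hcb
            exact hhit (j+1) (by omega) c hc hca hcb
  have hne : Nonempty ↥I := by
    obtain ⟨v⟩ := hconn.nonempty
    obtain ⟨u, hu, -⟩ := hImax v
    exact ⟨⟨u, hu⟩⟩
  rw [SimpleGraph.connected_iff]
  exact ⟨fun x y => key (G.dist x.1 y.1) x.1 x.2 y.1 y.2 le_rfl, hne⟩
end
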